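/- arXiv:2006.07052 — 8 statements merged into one kernel-verified Lean document; each statement's English description precedes it below -/
import Mathlib

section
/- For any positive reals ξ₁, ξ₂₁, ξ₂₂, c with ξ₂₂ ≤ 1, the integral over γ ∈ (0,1) of (1-γ)^{ξ₂₁-1} γ^{ξ₁-1} (1 - (c/(1+c))γ)^{ξ₂₂} is at least B(ξ₂₁+ξ₂₂, ξ₁) · [1 + (Γ(ξ₂₁)Γ(ξ₂₁+ξ₂₂+ξ₁)/(Γ(ξ₂₁+ξ₂₂)Γ(ξ₂₁+ξ₁)) − 1) · 1/(1+c)]. -/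
/-!
With `t = c / (1 + c)` one has `1 - t γ = t (1 - γ) + (1 - t) · 1`, so concavity of `x ↦ x ^ ξ₂₂`
(as `ξ₂₂ ≤ 1`) gives `(1 - t γ) ^ ξ₂₂ ≥ t (1 - γ) ^ ξ₂₂ + (1 - t)`. Integrating against the beta
kernel `γ ^ (ξ₁ - 1) (1 - γ) ^ (ξ₂₁ - 1)` bounds the integral below by
`t B(ξ₁, ξ₂₁ + ξ₂₂) + (1 - t) B(ξ₁, ξ₂₁)`, which is the right-hand side rewritten.
-/

open MeasureTheory Set Real ProbabilityTheory

lemma integrableOn_beta_kernel_and_integral_eq {α β : ℝ} (hα : 0 < α) (hβ : 0 < β) :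
    IntegrableOn (fun x : ℝ => x ^ (α - 1) * (1 - x) ^ (β - 1)) (Ioo 0 1) ∧
      ∫ x in Ioo (0 : ℝ) 1, x ^ (α - 1) * (1 - x) ^ (β - 1) = beta α β := by
  -- The beta pdf `betaPDFReal α β` is this kernel divided by `beta α β`, and has total mass one.
  have hB := beta_pos hα hβ
  have hnonneg : 0 ≤ᵐ[volume.restrict (Ioo 0 1)]
      fun x : ℝ => 1 / beta α β * x ^ (α - 1) * (1 - x) ^ (β - 1) :=
    ae_restrict_of_forall_mem measurableSet_Ioo fun x ⟨hx₀, hx₁⟩ => by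
      have : 0 ≤ 1 - x := by linarith
      dsimp only [Pi.zero_apply]
      positivity
  have hmeas : AEStronglyMeasurable
      (fun x : ℝ => 1 / beta α β * x ^ (α - 1) * (1 - x) ^ (β - 1)) (volume.restrict (Ioo 0 1)) :=
    (by fun_prop : Measurable _).aestronglyMeasurable
  have hlin := lintegral_betaPDF_eq_one hα hβ
  rw [lintegral_betaPDF] at hlin
  have hint := (lintegral_ofReal_ne_top_iff_integrable hmeas hnonneg).1
    (hlin ▸ ENNReal.one_ne_top)
  constructor
  · refine (hint.const_mul (beta α β)).congr (ae_of_all _ fun x => ?_)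
    field_simp
  · have h1 := integral_eq_lintegral_of_nonneg_ae hnonneg hmeas
    rw [hlin, ENNReal.toReal_one] at h1
    simp_rw [mul_assoc, integral_const_mul] at h1
    field_simp at h1
    exact h1

lemma mul_add_one_sub_le_mul_add_one_sub_rpow {p t x : ℝ} (hp₀ : 0 ≤ p) (hp₁ : p ≤ 1)
    (ht₀ : 0 ≤ t) (ht₁ : t ≤ 1) (hx : 0 ≤ x) :
    t * x ^ p + (1 - t) ≤ (t * x + (1 - t)) ^ p := by
  simpa using (concaveOn_rpow hp₀ hp₁).2 (mem_Ici.2 hx) (mem_Ici.2 zero_le_one) ht₀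
    (sub_nonneg.2 ht₁) (add_sub_cancel t 1)

lemma mul_beta_add_mul_beta_le_integral {a b p t : ℝ} (ha : 0 < a) (hb : 0 < b)
    (hp₀ : 0 ≤ p) (hp₁ : p ≤ 1) (ht₀ : 0 ≤ t) (ht₁ : t ≤ 1) :
    t * beta a (b + p) + (1 - t) * beta a b ≤
      ∫ γ in Ioo (0 : ℝ) 1, (1 - γ) ^ (b - 1) * γ ^ (a - 1) * (1 - t * γ) ^ p := by
  obtain ⟨hI₁, hB₁⟩ := integrableOn_beta_kernel_and_integral_eq ha (by positivity : 0 < b + p)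
  obtain ⟨hI₂, hB₂⟩ := integrableOn_beta_kernel_and_integral_eq ha hb
  have hI : IntegrableOn (fun γ => (1 - γ) ^ (b - 1) * γ ^ (a - 1) * (1 - t * γ) ^ p)
      (Ioo 0 1) := by
    refine (hI₂.mul_bdd (g := fun γ => (1 - t * γ) ^ p) (c := 1) (by fun_prop)
      (ae_restrict_of_forall_mem measurableSet_Ioo fun γ hγ => ?_)).congr
      (ae_of_all _ fun γ => by ring)
    have h₀ : 0 ≤ 1 - t * γ := by nlinarith [hγ.2]
    rw [norm_of_nonneg (rpow_nonneg h₀ p)]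
    exact rpow_le_one h₀ (by nlinarith [hγ.1]) hp₀
  rw [← hB₁, ← hB₂, ← integral_const_mul, ← integral_const_mul,
    ← integral_add (hI₁.const_mul t) (hI₂.const_mul _)]
  refine setIntegral_mono_on ((hI₁.const_mul t).add (hI₂.const_mul _)) hI measurableSet_Ioo
    fun γ ⟨hγ₀, hγ₁⟩ => ?_
  have h₀ : 0 < 1 - γ := sub_pos.2 hγ₁
  have hconc := mul_add_one_sub_le_mul_add_one_sub_rpow hp₀ hp₁ ht₀ ht₁ h₀.le
  rw [show t * (1 - γ) + (1 - t) = 1 - t * γ by ring] at hconc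
  calc t * (γ ^ (a - 1) * (1 - γ) ^ (b + p - 1)) + (1 - t) * (γ ^ (a - 1) * (1 - γ) ^ (b - 1))
      = (1 - γ) ^ (b - 1) * γ ^ (a - 1) * (t * (1 - γ) ^ p + (1 - t)) := by
        rw [show b + p - 1 = (b - 1) + p by ring, rpow_add h₀]; ring
    _ ≤ (1 - γ) ^ (b - 1) * γ ^ (a - 1) * (1 - t * γ) ^ p := by gcongr

theorem stmt_1 (ξ₁ ξ₂₁ ξ₂₂ c : ℝ) (hξ₁ : 0 < ξ₁) (hξ₂₁ : 0 < ξ₂₁) (hξ₂₂ : 0 < ξ₂₂)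
    (hc : 0 < c) (hle : ξ₂₂ ≤ 1) :
    ∫ γ in Set.Ioo (0:ℝ) 1, (1 - γ) ^ (ξ₂₁ - 1) * γ ^ (ξ₁ - 1) * (1 - (c / (1 + c)) * γ) ^ ξ₂₂
      ≥ (Real.Gamma (ξ₂₁ + ξ₂₂) * Real.Gamma ξ₁ / Real.Gamma (ξ₂₁ + ξ₂₂ + ξ₁)) *
        (1 + (Real.Gamma ξ₂₁ * Real.Gamma (ξ₂₁ + ξ₂₂ + ξ₁)
              / (Real.Gamma (ξ₂₁ + ξ₂₂) * Real.Gamma (ξ₂₁ + ξ₁)) - 1) * (1 / (1 + c))) := by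
  have h₁c : 0 < 1 + c := by linarith
  have hRHS : (Real.Gamma (ξ₂₁ + ξ₂₂) * Real.Gamma ξ₁ / Real.Gamma (ξ₂₁ + ξ₂₂ + ξ₁)) *
        (1 + (Real.Gamma ξ₂₁ * Real.Gamma (ξ₂₁ + ξ₂₂ + ξ₁)
              / (Real.Gamma (ξ₂₁ + ξ₂₂) * Real.Gamma (ξ₂₁ + ξ₁)) - 1) * (1 / (1 + c)))
      = c / (1 + c) * beta ξ₁ (ξ₂₁ + ξ₂₂) + (1 - c / (1 + c)) * beta ξ₁ ξ₂₁ := by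
    have := Gamma_pos_of_pos (by positivity : 0 < ξ₂₁ + ξ₂₂)
    have := Gamma_pos_of_pos (by positivity : 0 < ξ₂₁ + ξ₂₂ + ξ₁)
    have := Gamma_pos_of_pos (by positivity : 0 < ξ₂₁ + ξ₁)
    rw [beta, beta, add_comm ξ₁, add_comm ξ₁]
    field_simp
    ring
  rw [ge_iff_le, hRHS]
  exact mul_beta_add_mul_beta_le_integral hξ₁ hξ₂₁ hξ₂₂.le hle (by positivity)
    ((div_le_one h₁c).2 (by linarith))
end

section
/- For any positive reals ξ₁, ξ₂₁, ξ₂₂, c with ξ₂₂ > 1, the integral over γ ∈ (0,1) of (1-γ)^{ξ₂₁-1} γ^{ξ₁-1} (1 - (c/(1+c))γ)^{ξ₂₂} is at least B(ξ₂₁+ξ₂₂, ξ₁) · (1 + (ξ₁/(ξ₂₁+ξ₂₂−1)) · 1/(1+c))^{ξ₂₂}, provided ξ₂₁ + ξ₂₂ > 1. -/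
/-!
Write `a = c / (1 + c)` and `w(γ) = γ^(ξ₁-1) (1-γ)^(ξ₂₁+ξ₂₂-1)`. The integrand is `w · f^ξ₂₂` with
`f(γ) = (1 - aγ) / (1 - γ) = 1 + (1 - a) γ / (1 - γ)`, and the recurrence
`B(u + 1, v - 1) = u / (v - 1) · B(u, v)` shows that the `w`-weighted mean of `f` is
`m = 1 + ξ₁ / (ξ₂₁ + ξ₂₂ - 1) · 1 / (1 + c)`. Jensen's inequality for the convex map `t ↦ t^ξ₂₂`,
obtained here by integrating its tangent line at `m` against `w`, gives `∫ w f^ξ₂₂ ≥ (∫ w) m^ξ₂₂`.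
-/

open MeasureTheory Set Real ProbabilityTheory

theorem rpow_tangent_le {p m t : ℝ} (hp : 1 ≤ p) (hm : 0 < m) (ht : 0 ≤ t) :
    m ^ p + p * m ^ (p - 1) * (t - m) ≤ t ^ p := by
  have bernoulli := one_add_mul_self_le_rpow_one_add (s := t / m - 1)
    (by linarith [div_nonneg ht hm.le]) hp
  rw [add_sub_cancel, div_rpow ht hm.le, le_div_iff₀ (rpow_pos_of_pos hm p)] at bernoulli
  calc m ^ p + p * m ^ (p - 1) * (t - m) = (1 + p * (t / m - 1)) * m ^ p := by
        rw [rpow_sub_one hm.ne']; field_simp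
    _ ≤ t ^ p := bernoulli

theorem mul_rpow_le_integral_mul_rpow {α : Type*} [MeasurableSpace α] {μ : Measure α}
    {w f : α → ℝ} {p m : ℝ} (hp : 1 ≤ p) (hm : 0 < m) (hw : 0 ≤ᵐ[μ] w) (hf : 0 ≤ᵐ[μ] f)
    (hwi : Integrable w μ) (hwf : Integrable (fun x ↦ w x * f x) μ)
    (hwfp : Integrable (fun x ↦ w x * f x ^ p) μ)
    (hmean : ∫ x, w x * f x ∂μ = m * ∫ x, w x ∂μ) :
    (∫ x, w x ∂μ) * m ^ p ≤ ∫ x, w x * f x ^ p ∂μ := by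
  set k := p * m ^ (p - 1)
  have tangent_eq : ∀ x, w x * (m ^ p + k * (f x - m)) =
      (m ^ p - k * m) * w x + k * (w x * f x) := fun x ↦ by ring
  have tangent_int : Integrable (fun x ↦ (m ^ p - k * m) * w x + k * (w x * f x)) μ :=
    (hwi.const_mul _).add (hwf.const_mul _)
  calc (∫ x, w x ∂μ) * m ^ p
      = ∫ x, w x * (m ^ p + k * (f x - m)) ∂μ := by
        simp only [tangent_eq]
        rw [integral_add (hwi.const_mul _) (hwf.const_mul _), integral_const_mul,
          integral_const_mul, hmean]
        ring
    _ ≤ ∫ x, w x * f x ^ p ∂μ := by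
        refine integral_mono_ae ?_ hwfp ?_
        · simpa only [tangent_eq] using tangent_int
        · filter_upwards [hw, hf] with x hwx hfx
          exact mul_le_mul_of_nonneg_left (rpow_tangent_le hp hm hfx) hwx

noncomputable def betaKernel (u v x : ℝ) : ℝ := x ^ (u - 1) * (1 - x) ^ (v - 1)

theorem betaKernel_nonneg {u v x : ℝ} (hx : x ∈ Ioo 0 1) : 0 ≤ betaKernel u v x :=
  mul_nonneg (rpow_nonneg hx.1.le _) (rpow_nonneg (sub_nonneg.2 hx.2.le) _)

theorem lintegral_ofReal_betaKernel {u v : ℝ} (hu : 0 < u) (hv : 0 < v) :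
    ∫⁻ x in Ioo 0 1, ENNReal.ofReal (betaKernel u v x) = ENNReal.ofReal (beta u v) := by
  have hB := beta_pos hu hv
  have h : ENNReal.ofReal (1 / beta u v) *
      ∫⁻ x in Ioo 0 1, ENNReal.ofReal (betaKernel u v x) = 1 := by
    rw [← lintegral_const_mul' _ _ ENNReal.ofReal_ne_top, ← lintegral_betaPDF_eq_one hu hv,
      lintegral_betaPDF]
    simp only [betaKernel, mul_assoc, ENNReal.ofReal_mul (one_div_nonneg.2 hB.le)]
  calc ∫⁻ x in Ioo 0 1, ENNReal.ofReal (betaKernel u v x)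
      = ENNReal.ofReal (beta u v) * ENNReal.ofReal (1 / beta u v) *
          ∫⁻ x in Ioo 0 1, ENNReal.ofReal (betaKernel u v x) := by
        rw [← ENNReal.ofReal_mul hB.le, mul_one_div_cancel hB.ne', ENNReal.ofReal_one, one_mul]
    _ = ENNReal.ofReal (beta u v) := by rw [mul_assoc, h, mul_one]

theorem integrableOn_betaKernel {u v : ℝ} (hu : 0 < u) (hv : 0 < v) :
    IntegrableOn (betaKernel u v) (Ioo 0 1) := by
  refine ⟨by unfold betaKernel; fun_prop, ?_⟩
  rw [hasFiniteIntegral_iff_ofReal (ae_restrict_of_forall_mem measurableSet_Ioo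
    fun _ ↦ betaKernel_nonneg), lintegral_ofReal_betaKernel hu hv]
  exact ENNReal.ofReal_lt_top

theorem integral_betaKernel {u v : ℝ} (hu : 0 < u) (hv : 0 < v) :
    ∫ x in Ioo 0 1, betaKernel u v x = beta u v := by
  rw [integral_eq_lintegral_of_nonneg_ae (ae_restrict_of_forall_mem measurableSet_Ioo
    fun _ ↦ betaKernel_nonneg) (integrableOn_betaKernel hu hv).1,
    lintegral_ofReal_betaKernel hu hv, ENNReal.toReal_ofReal (beta_pos hu hv).le]

theorem beta_comm (u v : ℝ) : beta u v = beta v u := by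
  rw [beta, beta, mul_comm, add_comm]

theorem beta_add_one_sub_one {u v : ℝ} (hu : u ≠ 0) (hv : v ≠ 1) :
    beta (u + 1) (v - 1) = u / (v - 1) * beta u v := by
  have hv' : v - 1 ≠ 0 := sub_ne_zero.2 hv
  have hΓv : Gamma v = (v - 1) * Gamma (v - 1) := by
    rw [← Gamma_add_one hv', sub_add_cancel]
  rw [beta, beta, Gamma_add_one hu, hΓv, show u + 1 + (v - 1) = u + v by ring]
  field_simp

theorem betaKernel_mul_div_one_sub {u v x : ℝ} (hx : x ∈ Ioo 0 1) :
    betaKernel u v x * (x / (1 - x)) = betaKernel (u + 1) (v - 1) x := by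
  have hx0 : x ≠ 0 := hx.1.ne'
  have h1x : 0 < 1 - x := sub_pos.2 hx.2
  rw [betaKernel, betaKernel, add_sub_cancel_right, rpow_sub_one hx0 u,
    rpow_sub_one h1x.ne' (v - 1)]
  field_simp

theorem betaKernel_mul_one_sub_mul_div {u v a x : ℝ} (hx : x ∈ Ioo 0 1) :
    betaKernel u v x * ((1 - a * x) / (1 - x)) =
      betaKernel u v x + (1 - a) * betaKernel (u + 1) (v - 1) x := by
  have h1x : 1 - x ≠ 0 := (sub_pos.2 hx.2).ne'
  rw [← betaKernel_mul_div_one_sub hx]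
  field_simp
  ring

theorem integrableOn_betaKernel_mul_one_sub_mul_div {u v : ℝ} (a : ℝ) (hu : 0 < u)
    (hv : 1 < v) :
    IntegrableOn (fun x ↦ betaKernel u v x * ((1 - a * x) / (1 - x))) (Ioo 0 1) :=
  ((integrableOn_betaKernel hu (by linarith)).add
    ((integrableOn_betaKernel (by linarith) (by linarith)).const_mul (1 - a))).congr_fun
    (fun _ hx ↦ (betaKernel_mul_one_sub_mul_div hx).symm) measurableSet_Ioo

theorem integral_betaKernel_mul_one_sub_mul_div {u v : ℝ} (a : ℝ) (hu : 0 < u) (hv : 1 < v) :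
    ∫ x in Ioo 0 1, betaKernel u v x * ((1 - a * x) / (1 - x)) =
      (1 + u / (v - 1) * (1 - a)) * beta u v := by
  rw [setIntegral_congr_fun measurableSet_Ioo fun _ ↦ betaKernel_mul_one_sub_mul_div,
    integral_add (integrableOn_betaKernel hu (by linarith))
      ((integrableOn_betaKernel (by linarith) (by linarith)).const_mul _),
    integral_const_mul, integral_betaKernel hu (by linarith),
    integral_betaKernel (by linarith) (by linarith), beta_add_one_sub_one hu.ne' hv.ne']
  ring

theorem betaKernel_add_mul_div_rpow {u v p x y : ℝ} (hx : x ∈ Ioo 0 1) (hy : 0 ≤ y) :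
    betaKernel u (v + p) x * (y / (1 - x)) ^ p = y ^ p * betaKernel u v x := by
  have h1x : 0 < 1 - x := sub_pos.2 hx.2
  have h1xp : (1 - x) ^ p ≠ 0 := (rpow_pos_of_pos h1x p).ne'
  rw [betaKernel, betaKernel, div_rpow hy h1x.le, show v + p - 1 = v - 1 + p by ring,
    rpow_add h1x]
  field_simp

theorem integrableOn_betaKernel_add_mul_div_rpow {u v p a : ℝ} (hu : 0 < u) (hv : 0 < v)
    (hp : 0 ≤ p) (ha₀ : 0 ≤ a) (ha₁ : a ≤ 1) :
    IntegrableOn (fun x ↦ betaKernel u (v + p) x * ((1 - a * x) / (1 - x)) ^ p) (Ioo 0 1) := by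
  have hax : ∀ x ∈ Ioo (0 : ℝ) 1, 0 ≤ 1 - a * x ∧ 1 - a * x ≤ 1 := fun x hx ↦
    ⟨by nlinarith [hx.1, hx.2], by nlinarith [hx.1]⟩
  refine IntegrableOn.congr_fun ?_
    (fun x hx ↦ (betaKernel_add_mul_div_rpow hx (hax x hx).1).symm) measurableSet_Ioo
  refine (integrableOn_betaKernel hu hv).bdd_mul (c := 1) (by fun_prop) ?_
  filter_upwards [ae_restrict_mem measurableSet_Ioo] with x hx
  rw [norm_of_nonneg (rpow_nonneg (hax x hx).1 p)]
  exact rpow_le_one (hax x hx).1 (hax x hx).2 hp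

theorem stmt_2 (ξ₁ ξ₂₁ ξ₂₂ c : ℝ) (hξ₁ : 0 < ξ₁) (hξ₂₁ : 0 < ξ₂₁)
    (hc : 0 < c) (hgt : 1 < ξ₂₂) :
    ∫ γ in Set.Ioo (0:ℝ) 1, (1 - γ) ^ (ξ₂₁ - 1) * γ ^ (ξ₁ - 1) * (1 - (c / (1 + c)) * γ) ^ ξ₂₂
      ≥ (Real.Gamma (ξ₂₁ + ξ₂₂) * Real.Gamma ξ₁ / Real.Gamma (ξ₂₁ + ξ₂₂ + ξ₁)) *
        (1 + (ξ₁ / (ξ₂₁ + ξ₂₂ - 1)) * (1 / (1 + c))) ^ ξ₂₂ := by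
  set a := c / (1 + c)
  have ha₀ : 0 ≤ a := by positivity
  have ha₁ : a ≤ 1 := div_le_one_of_le₀ (by linarith) (by linarith)
  have h1a : 1 - a = 1 / (1 + c) := by unfold a; field_simp; ring
  have hax : ∀ x ∈ Ioo (0 : ℝ) 1, 0 ≤ 1 - a * x := fun x hx ↦ by nlinarith [hx.1, hx.2]
  have hs : 1 < ξ₂₁ + ξ₂₂ := by linarith
  have jensen := mul_rpow_le_integral_mul_rpow (μ := volume.restrict (Ioo 0 1))
    (w := betaKernel ξ₁ (ξ₂₁ + ξ₂₂)) (f := fun x ↦ (1 - a * x) / (1 - x)) hgt.le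
    (m := 1 + ξ₁ / (ξ₂₁ + ξ₂₂ - 1) * (1 - a)) (by rw [h1a]; positivity)
    (ae_restrict_of_forall_mem measurableSet_Ioo fun _ ↦ betaKernel_nonneg)
    (ae_restrict_of_forall_mem measurableSet_Ioo fun x hx ↦
      div_nonneg (hax x hx) (sub_nonneg.2 hx.2.le))
    (integrableOn_betaKernel hξ₁ (by linarith))
    (integrableOn_betaKernel_mul_one_sub_mul_div a hξ₁ hs)
    (integrableOn_betaKernel_add_mul_div_rpow hξ₁ hξ₂₁ (by linarith) ha₀ ha₁)
    (by rw [integral_betaKernel_mul_one_sub_mul_div a hξ₁ hs,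
      integral_betaKernel hξ₁ (by linarith)])
  rw [integral_betaKernel hξ₁ (by linarith), beta_comm, h1a, setIntegral_congr_fun
    measurableSet_Ioo fun x hx ↦ betaKernel_add_mul_div_rpow hx (hax x hx)] at jensen
  have integrand_eq : ∀ x : ℝ, (1 - x) ^ (ξ₂₁ - 1) * x ^ (ξ₁ - 1) * (1 - a * x) ^ ξ₂₂ =
      (1 - a * x) ^ ξ₂₂ * betaKernel ξ₁ ξ₂₁ x := fun x ↦ by rw [betaKernel]; ring
  simp only [integrand_eq]
  exact jensen
end

section
/- For any positive reals ξ₁, ξ₂, c: ∫₀¹ log(1+cρ) · ρ^{ξ₁-1}(1-ρ)^{ξ₂-1}/B(ξ₁,ξ₂) dρ = ∫₀¹ (1-ρ)^{ξ₁+ξ₂-1}/ρ · (1 − 1/(1+cρ)^{ξ₁}) dρ. -/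
/-!
Put `s = ξ₁ + ξ₂`. Writing `1 - (1 + t u)^(-s)` as an integral over `r ∈ (0, t)` and
integrating first in `u` gives
`log (1 + t) = ∫₀¹ (1 - u)^(s-1) / u · (1 - (1 + t u)^(-s)) du`.
Insert this with `t = c ρ` and exchange the order of integration: the inner integral becomes
`E[1 - (1 + c u ρ)^(-s)]` for `ρ ~ Beta(ξ₁, ξ₂)`, and the Möbius substitution
`ρ ↦ ρ (1 + x) / (1 + x ρ)`, a bijection of `(0, 1)`, gives
`E[(1 + x ρ)^(-s)] = (1 + x)^(-ξ₁)`.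
-/

open MeasureTheory Set Real

theorem integral_Ioo_eq_sub_of_hasDerivAt_of_nonneg {f f' : ℝ → ℝ} {a b : ℝ} (hab : a ≤ b)
    (hcont : ContinuousOn f (Icc a b)) (hderiv : ∀ x ∈ Ioo a b, HasDerivAt f (f' x) x)
    (hpos : ∀ x ∈ Ioo a b, 0 ≤ f' x) :
    ∫ x in Ioo a b, f' x = f b - f a := by
  rw [← integral_Ioc_eq_integral_Ioo, ← intervalIntegral.integral_of_le hab]
  exact intervalIntegral.integral_eq_sub_of_hasDerivAt_of_le hab hcont hderiv
    ((intervalIntegrable_iff_integrableOn_Ioc_of_le hab).2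
      (intervalIntegral.integrableOn_deriv_of_nonneg hcont hderiv hpos))

theorem setIntegral_setIntegral_swap_of_norm_le_mul {α β : Type*} [MeasurableSpace α]
    [MeasurableSpace β] {μ : Measure α} {ν : Measure β} [SFinite μ] [SFinite ν]
    {s : Set α} {t : Set β} (hs : MeasurableSet s) (ht : MeasurableSet t)
    {F : α → β → ℝ} {f : α → ℝ} {g : β → ℝ} (hF : Measurable (Function.uncurry F))
    (hf : IntegrableOn f s μ) (hg : IntegrableOn g t ν)
    (hFfg : ∀ x ∈ s, ∀ y ∈ t, ‖F x y‖ ≤ f x * g y) :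
    ∫ x in s, ∫ y in t, F x y ∂ν ∂μ = ∫ y in t, ∫ x in s, F x y ∂μ ∂ν := by
  refine integral_integral_swap (Integrable.mono' (hf.mul_prod hg) hF.aestronglyMeasurable ?_)
  rw [Measure.prod_restrict]
  exact ae_restrict_of_forall_mem (hs.prod ht) fun z hz => hFfg z.1 hz.1 z.2 hz.2

theorem integrableOn_one_sub_rpow {p : ℝ} (hp : -1 < p) :
    IntegrableOn (fun x : ℝ => (1 - x) ^ p) (Ioo 0 1) := by
  have h := (intervalIntegral.intervalIntegrable_rpow' (a := 0) (b := 1) hp).comp_sub_left 1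
  rw [sub_self, sub_zero] at h
  exact ((intervalIntegrable_iff_integrableOn_Ioc_of_le zero_le_one).mp h.symm).mono_set
    Ioo_subset_Ioc_self

theorem one_sub_one_add_rpow_neg_nonneg {x s : ℝ} (hx : 0 ≤ x) (hs : 0 ≤ s) :
    0 ≤ 1 - (1 + x) ^ (-s) := by
  linarith [rpow_le_one_of_one_le_of_nonpos (by linarith : (1:ℝ) ≤ 1 + x) (neg_nonpos.2 hs)]

theorem one_sub_one_add_rpow_neg_le {x s : ℝ} (hx : -1 < x) (hs : 0 ≤ s) :
    1 - (1 + x) ^ (-s) ≤ s * x := by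
  have hlog : log (1 + x) ≤ x := by linarith [log_le_sub_one_of_pos (by linarith : 0 < 1 + x)]
  have hexp := add_one_le_exp (log (1 + x) * -s)
  rw [← rpow_def_of_pos (by linarith)] at hexp
  nlinarith

-- `ProbabilityTheory.betaPDFReal` without its indicator of `(0, 1)`.
noncomputable def betaDensity (a b x : ℝ) : ℝ :=
  x ^ (a - 1) * (1 - x) ^ (b - 1) / ProbabilityTheory.beta a b

@[fun_prop]
theorem measurable_betaDensity (a b : ℝ) : Measurable (betaDensity a b) := by
  unfold betaDensity
  fun_prop

theorem betaDensity_nonneg {a b x : ℝ} (ha : 0 < a) (hb : 0 < b) (hx : x ∈ Icc (0:ℝ) 1) :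
    0 ≤ betaDensity a b x := by
  have := ProbabilityTheory.beta_pos ha hb
  have := rpow_nonneg hx.1 (a - 1)
  have := rpow_nonneg (sub_nonneg.2 hx.2) (b - 1)
  unfold betaDensity
  positivity

theorem lintegral_ofReal_betaDensity {a b : ℝ} (ha : 0 < a) (hb : 0 < b) :
    ∫⁻ x in Ioo 0 1, ENNReal.ofReal (betaDensity a b x) = 1 := by
  rw [← ProbabilityTheory.lintegral_betaPDF_eq_one ha hb, ProbabilityTheory.lintegral_betaPDF]
  refine setLIntegral_congr_fun measurableSet_Ioo fun x _ => ?_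
  rw [betaDensity, div_eq_inv_mul, one_div, mul_assoc]

theorem betaDensity_nonneg_ae {a b : ℝ} (ha : 0 < a) (hb : 0 < b) :
    0 ≤ᵐ[volume.restrict (Ioo 0 1)] betaDensity a b :=
  ae_restrict_of_forall_mem measurableSet_Ioo fun _ hx =>
    betaDensity_nonneg ha hb (Ioo_subset_Icc_self hx)

theorem integrableOn_betaDensity {a b : ℝ} (ha : 0 < a) (hb : 0 < b) :
    IntegrableOn (betaDensity a b) (Ioo 0 1) :=
  ⟨(measurable_betaDensity a b).aestronglyMeasurable,
    (hasFiniteIntegral_iff_ofReal (betaDensity_nonneg_ae ha hb)).2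
      (by rw [lintegral_ofReal_betaDensity ha hb]; exact ENNReal.one_lt_top)⟩

theorem integral_betaDensity {a b : ℝ} (ha : 0 < a) (hb : 0 < b) :
    ∫ x in Ioo 0 1, betaDensity a b x = 1 := by
  rw [integral_eq_lintegral_of_nonneg_ae (betaDensity_nonneg_ae ha hb)
    (measurable_betaDensity a b).aestronglyMeasurable, lintegral_ofReal_betaDensity ha hb,
    ENNReal.toReal_one]

section MobiusSubstitution

variable {x : ℝ}

theorem one_add_mul_pos_of_mem_Icc (hx : -1 < x) {ρ : ℝ} (hρ : ρ ∈ Icc (0:ℝ) 1) :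
    0 < 1 + x * ρ := by
  rcases le_total 0 x with hx0 | hx0
  · nlinarith [mul_nonneg hx0 hρ.1]
  · nlinarith [mul_le_mul_of_nonpos_left hρ.2 hx0]

theorem image_mobius_Ioo (hx : -1 < x) :
    (fun ρ => ρ * (1 + x) / (1 + x * ρ)) '' Ioo 0 1 = Ioo 0 1 := by
  ext v
  constructor
  · rintro ⟨ρ, hρ, rfl⟩
    have hD := one_add_mul_pos_of_mem_Icc hx (Ioo_subset_Icc_self hρ)
    exact ⟨div_pos (mul_pos hρ.1 (by linarith)) hD, (div_lt_one hD).2 (by nlinarith [hρ.2])⟩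
  · rintro ⟨hv0, hv1⟩
    have hD : 0 < 1 + x - x * v := by nlinarith
    refine ⟨v / (1 + x - x * v), ⟨div_pos hv0 hD, (div_lt_one hD).2 (by nlinarith)⟩, ?_⟩
    have h1x : 1 + x * (v / (1 + x - x * v)) = (1 + x) / (1 + x - x * v) := by
      field_simp
      ring
    simp only
    rw [h1x, div_mul_eq_mul_div, div_div_div_cancel_right₀ hD.ne', mul_div_assoc,
      div_self (by linarith), mul_one]

theorem injOn_mobius (hx : -1 < x) :
    InjOn (fun ρ => ρ * (1 + x) / (1 + x * ρ)) (Ioo 0 1) := by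
  intro ρ₁ h₁ ρ₂ h₂ h
  have hD₁ := one_add_mul_pos_of_mem_Icc hx (Ioo_subset_Icc_self h₁)
  have hD₂ := one_add_mul_pos_of_mem_Icc hx (Ioo_subset_Icc_self h₂)
  rw [div_eq_div_iff hD₁.ne' hD₂.ne'] at h
  nlinarith

theorem hasDerivWithinAt_mobius (hx : -1 < x) {ρ : ℝ} (hρ : ρ ∈ Ioo (0:ℝ) 1) :
    HasDerivWithinAt (fun ρ => ρ * (1 + x) / (1 + x * ρ)) ((1 + x) / (1 + x * ρ) ^ 2)
      (Ioo 0 1) ρ := by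
  have hD := one_add_mul_pos_of_mem_Icc hx (Ioo_subset_Icc_self hρ)
  refine ((((hasDerivAt_id ρ).mul_const (1 + x)).div
    (((hasDerivAt_id ρ).const_mul x).const_add 1) hD.ne').congr_deriv ?_).hasDerivWithinAt
  simp only [id]
  ring

theorem betaDensity_mul_rpow_eq_abs_deriv_mul_betaDensity_mobius {a b : ℝ} (hx : -1 < x)
    {ρ : ℝ} (hρ : ρ ∈ Ioo (0:ℝ) 1) :
    betaDensity a b ρ * (1 + x * ρ) ^ (-(a + b)) = (1 + x) ^ (-a) *
      (|(1 + x) / (1 + x * ρ) ^ 2| * betaDensity a b (ρ * (1 + x) / (1 + x * ρ))) := by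
  have hD := one_add_mul_pos_of_mem_Icc hx (Ioo_subset_Icc_self hρ)
  have hx1 : 0 < 1 + x := by linarith
  have h1ρ : 1 - ρ * (1 + x) / (1 + x * ρ) = (1 - ρ) / (1 + x * ρ) := by
    rw [eq_div_iff hD.ne', sub_mul, div_mul_cancel₀ _ hD.ne']
    ring
  have := rpow_pos_of_pos hD a
  have := rpow_pos_of_pos hD b
  have := rpow_pos_of_pos hx1 a
  rw [abs_of_pos (by positivity), betaDensity, betaDensity, h1ρ,
    div_rpow (mul_pos hρ.1 hx1).le hD.le, div_rpow (sub_pos.2 hρ.2).le hD.le,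
    mul_rpow hρ.1.le hx1.le, rpow_sub_one hx1.ne', rpow_sub_one hD.ne', rpow_sub_one hD.ne',
    rpow_neg hx1.le, rpow_neg hD.le, rpow_add hD]
  generalize 1 + x * ρ = D at *
  field_simp

theorem integrableOn_betaDensity_mul_one_add_mul_rpow {a b : ℝ} (ha : 0 < a) (hb : 0 < b)
    (hx : -1 < x) :
    IntegrableOn (fun ρ => betaDensity a b ρ * (1 + x * ρ) ^ (-(a + b))) (Ioo 0 1) := by
  have h := (integrableOn_image_iff_integrableOn_abs_deriv_smul measurableSet_Ioo
    (fun _ => hasDerivWithinAt_mobius hx) (injOn_mobius hx) (betaDensity a b)).1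
  rw [image_mobius_Ioo hx] at h
  exact IntegrableOn.congr_fun ((h (integrableOn_betaDensity ha hb)).const_mul _)
    (fun _ hρ => (betaDensity_mul_rpow_eq_abs_deriv_mul_betaDensity_mobius hx hρ).symm)
    measurableSet_Ioo

theorem integral_betaDensity_mul_one_add_mul_rpow {a b : ℝ} (ha : 0 < a) (hb : 0 < b)
    (hx : -1 < x) :
    ∫ ρ in Ioo 0 1, betaDensity a b ρ * (1 + x * ρ) ^ (-(a + b)) = (1 + x) ^ (-a) := by
  have h := integral_image_eq_integral_abs_deriv_smul measurableSet_Ioo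
    (fun _ => hasDerivWithinAt_mobius hx) (injOn_mobius hx) (betaDensity a b)
  rw [image_mobius_Ioo hx, integral_betaDensity ha hb] at h
  simp only [smul_eq_mul] at h
  rw [setIntegral_congr_fun measurableSet_Ioo
    (fun _ hρ => betaDensity_mul_rpow_eq_abs_deriv_mul_betaDensity_mobius hx hρ),
    integral_const_mul, ← h, mul_one]

end MobiusSubstitution

theorem integral_betaDensity_mul_one_sub_rpow {a b x : ℝ} (ha : 0 < a) (hb : 0 < b)
    (hx : -1 < x) :
    ∫ ρ in Ioo 0 1, betaDensity a b ρ * (1 - (1 + x * ρ) ^ (-(a + b))) =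
      1 - (1 + x) ^ (-a) := by
  simp only [mul_sub, mul_one]
  rw [integral_sub (integrableOn_betaDensity ha hb)
    (integrableOn_betaDensity_mul_one_add_mul_rpow ha hb hx), integral_betaDensity ha hb,
    integral_betaDensity_mul_one_add_mul_rpow ha hb hx]

theorem integral_one_sub_rpow_mul_one_add_mul_rpow {s r : ℝ} (hs : 0 < s) (hr : -1 < r) :
    ∫ u in Ioo 0 1, s * (1 - u) ^ (s - 1) * (1 + r * u) ^ (-s - 1) = 1 / (1 + r) := by
  have hr1 : 0 < 1 + r := by linarith
  rw [integral_Ioo_eq_sub_of_hasDerivAt_of_nonneg zero_le_one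
    (f := fun u => -((1 - u) ^ s * (1 + r * u) ^ (-s)) / (1 + r))]
  · simp [zero_rpow hs.ne', neg_div]
  · intro u hu
    have hD := one_add_mul_pos_of_mem_Icc hr hu
    exact ContinuousAt.continuousWithinAt
      (by fun_prop (disch := first | exact Or.inr hs.le | exact Or.inl hD.ne'))
  · intro u hu
    have hD := one_add_mul_pos_of_mem_Icc hr (Ioo_subset_Icc_self hu)
    have hu1 : 0 < 1 - u := sub_pos.2 hu.2
    refine (((((hasDerivAt_id u).const_sub 1).rpow_const (Or.inl hu1.ne')).mul
      ((((hasDerivAt_id u).const_mul r).const_add 1).rpow_const (Or.inl hD.ne'))).neg.div_const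
      (1 + r)).congr_deriv ?_
    simp only [id]
    rw [rpow_sub_one hu1.ne', rpow_sub_one hD.ne']
    set D := 1 + r * u with hD_def
    field_simp
    rw [hD_def]
    ring
  · intro u hu
    have hD := one_add_mul_pos_of_mem_Icc hr (Ioo_subset_Icc_self hu)
    have := rpow_nonneg (sub_pos.2 hu.2).le (s - 1)
    have := rpow_nonneg hD.le (-s - 1)
    positivity

theorem integral_mul_one_add_mul_rpow {s u t : ℝ} (hs : 0 ≤ s) (hu : 0 ≤ u) (ht : 0 ≤ t) :
    ∫ r in Ioo 0 t, s * u * (1 + r * u) ^ (-s - 1) = 1 - (1 + t * u) ^ (-s) := by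
  rw [integral_Ioo_eq_sub_of_hasDerivAt_of_nonneg ht (f := fun r => -(1 + r * u) ^ (-s))]
  · simp only [zero_mul, add_zero, one_rpow, sub_neg_eq_add]
    ring
  · intro r hr
    have hD : 0 < 1 + r * u := by nlinarith [hr.1]
    exact ContinuousAt.continuousWithinAt (by fun_prop (disch := exact Or.inl hD.ne'))
  · intro r hr
    have hD : 0 < 1 + r * u := by nlinarith [hr.1]
    refine ((((hasDerivAt_id r).mul_const u).const_add 1).rpow_const
      (Or.inl hD.ne')).neg.congr_deriv ?_
    simp only [id]
    ring
  · intro r hr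
    have := rpow_nonneg (by nlinarith [hr.1] : (0:ℝ) ≤ 1 + r * u) (-s - 1)
    positivity

theorem integral_one_div_one_add {t : ℝ} (ht : 0 ≤ t) :
    ∫ r in Ioo 0 t, 1 / (1 + r) = log (1 + t) := by
  rw [integral_Ioo_eq_sub_of_hasDerivAt_of_nonneg ht (f := fun r => log (1 + r))]
  · simp
  · intro r hr
    have hD : 0 < 1 + r := by linarith [hr.1]
    exact ContinuousAt.continuousWithinAt (by fun_prop (disch := exact hD.ne'))
  · intro r hr
    have hD : 0 < 1 + r := by linarith [hr.1]
    exact ((hasDerivAt_id r).const_add 1).log hD.ne'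
  · intro r hr
    have : 0 < 1 + r := by linarith [hr.1]
    positivity

theorem norm_rpow_div_mul_one_sub_one_add_rpow_neg_le {s t c u : ℝ} (hs : 0 ≤ s)
    (ht : t ∈ Icc 0 c) (hu : u ∈ Ioo (0:ℝ) 1) :
    ‖(1 - u) ^ (s - 1) / u * (1 - (1 + t * u) ^ (-s))‖ ≤ s * c * (1 - u) ^ (s - 1) := by
  have htu : 0 ≤ t * u := mul_nonneg ht.1 hu.1.le
  have hK := rpow_nonneg (sub_pos.2 hu.2).le (s - 1)
  rw [norm_of_nonneg (mul_nonneg (div_nonneg hK hu.1.le)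
    (one_sub_one_add_rpow_neg_nonneg htu hs))]
  calc (1 - u) ^ (s - 1) / u * (1 - (1 + t * u) ^ (-s))
      ≤ (1 - u) ^ (s - 1) / u * (s * (c * u)) :=
        mul_le_mul_of_nonneg_left ((one_sub_one_add_rpow_neg_le (by linarith) hs).trans
          (mul_le_mul_of_nonneg_left (mul_le_mul_of_nonneg_right ht.2 hu.1.le) hs))
          (div_nonneg hK hu.1.le)
    _ = s * c * (1 - u) ^ (s - 1) := by
        field_simp [hu.1.ne']

theorem log_one_add_eq_integral {s t : ℝ} (hs : 0 < s) (ht : 0 ≤ t) :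
    log (1 + t) = ∫ u in Ioo 0 1, (1 - u) ^ (s - 1) / u * (1 - (1 + t * u) ^ (-s)) := by
  have hinner : ∀ u ∈ Ioo (0:ℝ) 1, (1 - u) ^ (s - 1) / u * (1 - (1 + t * u) ^ (-s))
      = ∫ r in Ioo 0 t, s * (1 - u) ^ (s - 1) * (1 + r * u) ^ (-s - 1) := by
    intro u hu
    rw [← integral_mul_one_add_mul_rpow hs.le hu.1.le ht, ← integral_const_mul]
    refine setIntegral_congr_fun measurableSet_Ioo fun r _ => ?_
    field_simp [hu.1.ne']
  have hbound : ∀ r ∈ Ioo 0 t, ∀ u ∈ Ioo (0:ℝ) 1,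
      ‖s * (1 - u) ^ (s - 1) * (1 + r * u) ^ (-s - 1)‖ ≤ 1 * (s * (1 - u) ^ (s - 1)) := by
    intro r hr u hu
    have hD : 1 ≤ 1 + r * u := by nlinarith [hr.1, hu.1]
    have := rpow_nonneg (sub_pos.2 hu.2).le (s - 1)
    have := rpow_nonneg (zero_le_one.trans hD) (-s - 1)
    rw [norm_of_nonneg (by positivity), one_mul]
    exact mul_le_of_le_one_right (by positivity)
      (rpow_le_one_of_one_le_of_nonpos hD (by linarith))
  calc log (1 + t)
      = ∫ r in Ioo 0 t, ∫ u in Ioo 0 1, s * (1 - u) ^ (s - 1) * (1 + r * u) ^ (-s - 1) := by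
        rw [← integral_one_div_one_add ht]
        exact setIntegral_congr_fun measurableSet_Ioo fun r hr =>
          (integral_one_sub_rpow_mul_one_add_mul_rpow hs (by linarith [hr.1])).symm
    _ = ∫ u in Ioo 0 1, ∫ r in Ioo 0 t, s * (1 - u) ^ (s - 1) * (1 + r * u) ^ (-s - 1) :=
        setIntegral_setIntegral_swap_of_norm_le_mul measurableSet_Ioo measurableSet_Ioo
          (by fun_prop) (integrableOn_const measure_Ioo_lt_top.ne)
          ((integrableOn_one_sub_rpow (by linarith)).const_mul s) hbound
    _ = _ := (setIntegral_congr_fun measurableSet_Ioo hinner).symm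

theorem stmt_3 (ξ₁ ξ₂ c : ℝ) (hξ₁ : 0 < ξ₁) (hξ₂ : 0 < ξ₂) (hc : 0 < c) :
    ∫ ρ in Set.Ioo (0:ℝ) 1,
        Real.log (1 + c * ρ) * (ρ ^ (ξ₁ - 1) * (1 - ρ) ^ (ξ₂ - 1)
          / (Real.Gamma ξ₁ * Real.Gamma ξ₂ / Real.Gamma (ξ₁ + ξ₂)))
      = ∫ ρ in Set.Ioo (0:ℝ) 1,
          (1 - ρ) ^ (ξ₁ + ξ₂ - 1) / ρ * (1 - 1 / (1 + c * ρ) ^ ξ₁) := by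
  set s := ξ₁ + ξ₂
  have hs : 0 < s := add_pos hξ₁ hξ₂
  have hbound : ∀ ρ ∈ Ioo (0:ℝ) 1, ∀ u ∈ Ioo (0:ℝ) 1,
      ‖betaDensity ξ₁ ξ₂ ρ * ((1 - u) ^ (s - 1) / u * (1 - (1 + c * ρ * u) ^ (-s)))‖
        ≤ betaDensity ξ₁ ξ₂ ρ * (s * c * (1 - u) ^ (s - 1)) := by
    intro ρ hρ u hu
    have hw := betaDensity_nonneg hξ₁ hξ₂ (Ioo_subset_Icc_self hρ)
    rw [norm_mul, norm_of_nonneg hw]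
    exact mul_le_mul_of_nonneg_left (norm_rpow_div_mul_one_sub_one_add_rpow_neg_le hs.le
      ⟨(mul_pos hc hρ.1).le, mul_le_of_le_one_right hc.le hρ.2.le⟩ hu) hw
  calc ∫ ρ in Ioo 0 1, log (1 + c * ρ) * betaDensity ξ₁ ξ₂ ρ
      = ∫ ρ in Ioo 0 1, ∫ u in Ioo 0 1,
          betaDensity ξ₁ ξ₂ ρ * ((1 - u) ^ (s - 1) / u * (1 - (1 + c * ρ * u) ^ (-s))) :=
        setIntegral_congr_fun measurableSet_Ioo fun ρ hρ => by
          rw [log_one_add_eq_integral hs (mul_pos hc hρ.1).le, integral_const_mul, mul_comm]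
    _ = ∫ u in Ioo 0 1, ∫ ρ in Ioo 0 1,
          betaDensity ξ₁ ξ₂ ρ * ((1 - u) ^ (s - 1) / u * (1 - (1 + c * ρ * u) ^ (-s))) :=
        setIntegral_setIntegral_swap_of_norm_le_mul measurableSet_Ioo measurableSet_Ioo
          (by fun_prop) (integrableOn_betaDensity hξ₁ hξ₂)
          ((integrableOn_one_sub_rpow (by linarith)).const_mul (s * c)) hbound
    _ = ∫ u in Ioo 0 1, (1 - u) ^ (s - 1) / u * (1 - (1 + c * u) ^ (-ξ₁)) :=
        setIntegral_congr_fun measurableSet_Ioo fun u hu => by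
          have hcu : -1 < c * u := by nlinarith [hu.1]
          rw [← integral_betaDensity_mul_one_sub_rpow hξ₁ hξ₂ hcu, ← integral_const_mul]
          refine setIntegral_congr_fun measurableSet_Ioo fun ρ _ => ?_
          rw [mul_right_comm c ρ u]
          ring
    _ = _ := setIntegral_congr_fun measurableSet_Ioo fun u hu => by
          rw [rpow_neg (by nlinarith [hu.1]), one_div]
end

section
/- Let ξ₁ > 0 and 1 < ξ₂₁ < ξ₂₂, and for i ∈ {1,2} let F_i(q) = ∫₀^q γ^{ξ₁-1}(1-γ)^{ξ₂ᵢ-1}/B(ξ₁,ξ₂ᵢ) dγ for q ∈ (0,1) be the Beta(ξ₁,ξ₂ᵢ) CDF. Then the ratio F₂^{-1}(ω)/F₁^{-1}(ω) of inverse CDFs is nondecreasing in ω ∈ (0,1). -/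
open MeasureTheory Set Real

/-- The Beta(ξ₁, ξ₂) cumulative distribution function on (0,1). -/
noncomputable def betaCDF (ξ₁ ξ₂ : ℝ) (q : ℝ) : ℝ :=
  ∫ γ in Set.Ioo (0:ℝ) q,
    γ ^ (ξ₁ - 1) * (1 - γ) ^ (ξ₂ - 1) / (Real.Gamma ξ₁ * Real.Gamma ξ₂ / Real.Gamma (ξ₁ + ξ₂))

/-!
Write `Fᵢ`, `fᵢ` for the Beta(ξ₁, ξ₂ᵢ) distribution function and density. Let `x ≤ x'` be
`F₁`-quantiles and `y`, `y'` the `F₂`-quantiles of the same two levels, and put `c = y' / x'`;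
then `c < 1` because `F₁ < F₂` on (0,1). For `0 < c ≤ 1` the gap `g t = F₂ (c t) - F₁ t` has
`g' t = f₁ t * (exp (L t) - 1)` with `L t = log (c f₂ (c t) / f₁ t)`. For `c = 1`, `L` is
decreasing, so `g` cannot dip below `0` between its zeros at `0` and `1`: this gives `F₁ < F₂`.
For `c < 1`, `g` vanishes at `0` and at `x'` and is negative at `1`; the derivative of `L` has the
sign of an increasing affine function, so `L` is quasiconvex and `g'` cannot change sign in the
pattern `-, +, -`. By the mean value theorem `g x ≥ 0`, i.e. `F₁ x ≤ F₂ (c x)`, i.e. `y ≤ c x`.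
-/

open ProbabilityTheory

section Calculus

variable {g g' : ℝ → ℝ}

lemma exists_hasDerivAt_eq_slope_of_Icc_subset {a b s t : ℝ} (hg : ContinuousOn g (Icc a b))
    (hg' : ∀ r ∈ Ioo a b, HasDerivAt g (g' r) r) (has : a ≤ s) (hst : s < t) (htb : t ≤ b) :
    ∃ r ∈ Ioo s t, g' r = (g t - g s) / (t - s) :=
  exists_hasDerivAt_eq_slope g g' hst (hg.mono (Icc_subset_Icc has htb))
    fun r hr => hg' r ⟨has.trans_lt hr.1, hr.2.trans_le htb⟩

lemma exists_deriv_nonpos_nonneg {a x b : ℝ} (hax : a < x) (hxb : x < b)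
    (hg : ContinuousOn g (Icc a b)) (hg' : ∀ r ∈ Ioo a b, HasDerivAt g (g' r) r)
    (h₁ : g x ≤ g a) (h₂ : g x ≤ g b) :
    ∃ u w, a < u ∧ u < w ∧ w < b ∧ g' u ≤ 0 ∧ 0 ≤ g' w := by
  obtain ⟨u, hu, hgu⟩ := exists_hasDerivAt_eq_slope_of_Icc_subset hg hg' le_rfl hax hxb.le
  obtain ⟨w, hw, hgw⟩ := exists_hasDerivAt_eq_slope_of_Icc_subset hg hg' hax.le hxb le_rfl
  refine ⟨u, w, hu.1, hu.2.trans hw.1, hw.2, ?_, ?_⟩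
  · rw [hgu]
    exact div_nonpos_of_nonpos_of_nonneg (sub_nonpos.2 h₁) (sub_pos.2 hax).le
  · rw [hgw]
    exact div_nonneg (sub_nonneg.2 h₂) (sub_pos.2 hxb).le

lemma exists_deriv_neg_pos_neg {a x x' b : ℝ} (hax : a < x) (hxx' : x < x') (hx'b : x' < b)
    (hg : ContinuousOn g (Icc a b)) (hg' : ∀ r ∈ Ioo a b, HasDerivAt g (g' r) r)
    (h₁ : g x < g a) (h₂ : g x < g x') (h₃ : g b < g x') :
    ∃ u v w, a < u ∧ u < v ∧ v < w ∧ w < b ∧ g' u < 0 ∧ 0 < g' v ∧ g' w < 0 := by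
  obtain ⟨u, hu, hgu⟩ :=
    exists_hasDerivAt_eq_slope_of_Icc_subset hg hg' le_rfl hax (hxx'.trans hx'b).le
  obtain ⟨v, hv, hgv⟩ := exists_hasDerivAt_eq_slope_of_Icc_subset hg hg' hax.le hxx' hx'b.le
  obtain ⟨w, hw, hgw⟩ :=
    exists_hasDerivAt_eq_slope_of_Icc_subset hg hg' (hax.trans hxx').le hx'b le_rfl
  refine ⟨u, v, w, hu.1, hu.2.trans hv.1, hv.2.trans hw.1, hw.2, ?_, ?_, ?_⟩
  · rw [hgu]
    exact div_neg_of_neg_of_pos (sub_neg.2 h₁) (sub_pos.2 hax)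
  · rw [hgv]
    exact div_pos (sub_pos.2 h₂) (sub_pos.2 hxx')
  · rw [hgw]
    exact div_neg_of_neg_of_pos (sub_neg.2 h₃) (sub_pos.2 hx'b)

lemma le_max_of_hasDerivAt_of_deriv_pos_imp {u v w : ℝ} (huv : u ≤ v) (hvw : v ≤ w)
    (hg' : ∀ x ∈ Icc u w, HasDerivAt g (g' x) x)
    (hsign : ∀ s ∈ Icc u w, ∀ t ∈ Icc u w, s ≤ t → 0 < g' s → 0 < g' t) :
    g v ≤ max (g u) (g w) := by
  have hcont : ContinuousOn g (Icc u w) := fun x hx => (hg' x hx).continuousAt.continuousWithinAt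
  have hderiv : ∀ {p q}, u ≤ p → q ≤ w →
      ∀ x ∈ interior (Icc p q), HasDerivWithinAt g (g' x) (interior (Icc p q)) x := by
    intro p q hp hq x hx
    rw [interior_Icc] at hx
    exact (hg' x ⟨hp.trans hx.1.le, hx.2.le.trans hq⟩).hasDerivWithinAt
  by_cases hpos : ∃ s ∈ Icc u v, 0 < g' s
  · obtain ⟨s, hs, hs'⟩ := hpos
    have hmono : MonotoneOn g (Icc v w) :=
      monotoneOn_of_hasDerivWithinAt_nonneg (convex_Icc v w)
        (hcont.mono (Icc_subset_Icc huv le_rfl)) (hderiv huv le_rfl) fun x hx => by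
          rw [interior_Icc] at hx
          exact (hsign s ⟨hs.1, hs.2.trans hvw⟩ x ⟨huv.trans hx.1.le, hx.2.le⟩
            (hs.2.trans hx.1.le) hs').le
    exact le_max_of_le_right (hmono ⟨le_rfl, hvw⟩ ⟨hvw, le_rfl⟩ hvw)
  · push Not at hpos
    have hanti : AntitoneOn g (Icc u v) :=
      antitoneOn_of_hasDerivWithinAt_nonpos (convex_Icc u v)
        (hcont.mono (Icc_subset_Icc le_rfl hvw)) (hderiv le_rfl hvw) fun x hx => by
          rw [interior_Icc] at hx
          exact hpos x ⟨hx.1.le, hx.2.le⟩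
    exact le_max_of_le_left (hanti ⟨le_rfl, huv⟩ ⟨huv, le_rfl⟩ huv)

end Calculus

section BetaDistribution

variable {a b : ℝ}

lemma betaPDFReal_of_mem_Ioo {x : ℝ} (hx : x ∈ Ioo (0:ℝ) 1) :
    betaPDFReal a b x = x ^ (a - 1) * (1 - x) ^ (b - 1) / beta a b := by
  rw [betaPDFReal, if_pos (mem_Ioo.1 hx)]
  ring

lemma betaPDFReal_nonneg (ha : 0 < a) (hb : 0 < b) (x : ℝ) : 0 ≤ betaPDFReal a b x := by
  by_cases hx : 0 < x ∧ x < 1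
  · exact (betaPDFReal_pos hx.1 hx.2 ha hb).le
  · rw [betaPDFReal, if_neg hx]

lemma integrable_betaPDFReal (ha : 0 < a) (hb : 0 < b) : Integrable (betaPDFReal a b) :=
  (lintegral_ofReal_ne_top_iff_integrable (by fun_prop)
    (ae_of_all _ (betaPDFReal_nonneg ha hb))).1
    ((lintegral_betaPDF_eq_one ha hb).trans_ne ENNReal.one_ne_top)

lemma integral_betaPDFReal (ha : 0 < a) (hb : 0 < b) : ∫ x, betaPDFReal a b x = 1 := by
  rw [integral_eq_lintegral_of_nonneg_ae (ae_of_all _ (betaPDFReal_nonneg ha hb)) (by fun_prop)]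
  exact congrArg ENNReal.toReal (lintegral_betaPDF_eq_one ha hb)

lemma betaCDF_eq_intervalIntegral {q : ℝ} (hq₀ : 0 ≤ q) (hq₁ : q ≤ 1) :
    betaCDF a b q = ∫ x in 0..q, betaPDFReal a b x := by
  rw [intervalIntegral.integral_of_le hq₀, integral_Ioc_eq_integral_Ioo]
  exact setIntegral_congr_fun measurableSet_Ioo fun x hx =>
    (betaPDFReal_of_mem_Ioo ⟨hx.1, hx.2.trans_le hq₁⟩).symm

lemma betaCDF_zero : betaCDF a b 0 = 0 := by
  simp [betaCDF]

lemma betaCDF_one (ha : 0 < a) (hb : 0 < b) : betaCDF a b 1 = 1 := by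
  rw [betaCDF_eq_intervalIntegral zero_le_one le_rfl, intervalIntegral.integral_of_le zero_le_one,
    setIntegral_eq_integral_of_forall_compl_eq_zero, integral_betaPDFReal ha hb]
  intro x hx
  rw [betaPDFReal, if_neg fun h => hx ⟨h.1, h.2.le⟩]

lemma continuousOn_betaCDF (ha : 0 < a) (hb : 0 < b) : ContinuousOn (betaCDF a b) (Icc 0 1) :=
  (intervalIntegral.continuous_primitive
    (fun _ _ => (integrable_betaPDFReal ha hb).intervalIntegrable) 0).continuousOn.congr
    fun _ hq => betaCDF_eq_intervalIntegral hq.1 hq.2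

lemma hasDerivAt_betaCDF (ha : 0 < a) (hb : 0 < b) {t : ℝ} (ht : t ∈ Ioo (0:ℝ) 1) :
    HasDerivAt (betaCDF a b) (betaPDFReal a b t) t := by
  have hcont : ContinuousAt (betaPDFReal a b) t := by
    have hformula : ContinuousAt (fun x => x ^ (a - 1) * (1 - x) ^ (b - 1) / beta a b) t :=
      ((continuousAt_id.rpow_const (Or.inl ht.1.ne')).mul
        ((continuousAt_const.sub continuousAt_id).rpow_const
          (Or.inl (sub_pos.2 ht.2).ne'))).div_const _
    exact hformula.congr (Filter.eventually_of_mem (Ioo_mem_nhds ht.1 ht.2)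
      fun x hx => (betaPDFReal_of_mem_Ioo hx).symm)
  exact (intervalIntegral.integral_hasDerivAt_right
    (integrable_betaPDFReal ha hb).intervalIntegrable
    (stronglyMeasurable_betaPDFReal a b).stronglyMeasurableAtFilter hcont).congr_of_eventuallyEq
    (Filter.eventually_of_mem (Ioo_mem_nhds ht.1 ht.2)
      fun q hq => betaCDF_eq_intervalIntegral hq.1.le hq.2.le)

lemma betaCDF_strictMonoOn (ha : 0 < a) (hb : 0 < b) : StrictMonoOn (betaCDF a b) (Icc 0 1) :=
  strictMonoOn_of_deriv_pos (convex_Icc 0 1) (continuousOn_betaCDF ha hb) fun t ht => by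
    rw [interior_Icc] at ht
    rw [(hasDerivAt_betaCDF ha hb ht).deriv]
    exact betaPDFReal_pos ht.1 ht.2 ha hb

end BetaDistribution

section ScaledComparison

variable {a b₁ b₂ c : ℝ}

noncomputable def betaLogDensityRatio (a b₁ b₂ c t : ℝ) : ℝ :=
  log (c ^ a * beta a b₁ / beta a b₂) + (b₂ - 1) * log (1 - c * t) - (b₁ - 1) * log (1 - t)

lemma mul_betaPDFReal_mul_eq (ha : 0 < a) (hb₁ : 0 < b₁) (hb₂ : 0 < b₂) (hc₀ : 0 < c)
    (hc₁ : c ≤ 1) {t : ℝ} (ht : t ∈ Ioo (0:ℝ) 1) :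
    c * betaPDFReal a b₂ (c * t) = betaPDFReal a b₁ t * exp (betaLogDensityRatio a b₁ b₂ c t) := by
  have hct : 0 < 1 - c * t := by nlinarith [ht.2]
  have ht₁ : 0 < 1 - t := sub_pos.2 ht.2
  have hB₁ := beta_pos ha hb₁
  have hB₂ := beta_pos ha hb₂
  rw [betaPDFReal_of_mem_Ioo ⟨mul_pos hc₀ ht.1, by linarith⟩, betaPDFReal_of_mem_Ioo ht,
    betaLogDensityRatio, exp_sub, exp_add, exp_log (by positivity), mul_comm (b₂ - 1),
    mul_comm (b₁ - 1), ← rpow_def_of_pos hct, ← rpow_def_of_pos ht₁,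
    mul_rpow hc₀.le ht.1.le, rpow_sub_one hc₀.ne']
  field_simp

lemma hasDerivAt_betaLogDensityRatio {t : ℝ} (ht : t < 1) (hct : c * t < 1) :
    HasDerivAt (betaLogDensityRatio a b₁ b₂ c)
      ((b₁ - 1) / (1 - t) - c * (b₂ - 1) / (1 - c * t)) t := by
  have h₁ : HasDerivAt (fun s => log (1 - c * s)) (-c / (1 - c * t)) t := by
    simpa using (((hasDerivAt_id t).const_mul c).const_sub 1).log (sub_pos.2 hct).ne'
  have h₂ : HasDerivAt (fun s => log (1 - s)) (-1 / (1 - t)) t := by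
    simpa using ((hasDerivAt_id t).const_sub 1).log (sub_pos.2 ht).ne'
  exact (((h₁.const_mul (b₂ - 1)).const_add _).sub (h₂.const_mul (b₁ - 1))).congr_deriv (by ring)

lemma betaLogDensityRatio_le_max (hb : b₁ < b₂) (hc₀ : 0 < c) (hc₁ : c ≤ 1) {u v w : ℝ}
    (huv : u ≤ v) (hvw : v ≤ w) (hw : w < 1) :
    betaLogDensityRatio a b₁ b₂ c v ≤
      max (betaLogDensityRatio a b₁ b₂ c u) (betaLogDensityRatio a b₁ b₂ c w) := by
  have hct : ∀ t < 1, c * t < 1 := fun t ht => by nlinarith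
  -- the derivative is `P t / ((1 - t) * (1 - c t))` with `P` affine of slope `c (b₂ - b₁) > 0`
  have hsign : ∀ t < 1, 0 < (b₁ - 1) / (1 - t) - c * (b₂ - 1) / (1 - c * t) ↔
      0 < (b₁ - 1) * (1 - c * t) - c * (b₂ - 1) * (1 - t) := fun t ht => by
    have h₁ : 0 < 1 - t := sub_pos.2 ht
    have h₂ : 0 < 1 - c * t := sub_pos.2 (hct t ht)
    rw [div_sub_div _ _ h₁.ne' h₂.ne', div_pos_iff_of_pos_right (mul_pos h₁ h₂),
      mul_comm (1 - t)]
  refine le_max_of_hasDerivAt_of_deriv_pos_imp huv hvw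
    (fun t ht => hasDerivAt_betaLogDensityRatio (ht.2.trans_lt hw) (hct t (ht.2.trans_lt hw)))
    fun s hs t ht hst hpos => ?_
  rw [hsign s (hs.2.trans_lt hw)] at hpos
  rw [hsign t (ht.2.trans_lt hw)]
  nlinarith [mul_nonneg (mul_nonneg hc₀.le (sub_nonneg.2 hst)) (sub_nonneg.2 hb.le)]

lemma continuousOn_betaCDF_mul_sub (ha : 0 < a) (hb₁ : 0 < b₁) (hb₂ : 0 < b₂) (hc₀ : 0 ≤ c)
    (hc₁ : c ≤ 1) : ContinuousOn (fun s => betaCDF a b₂ (c * s) - betaCDF a b₁ s) (Icc 0 1) :=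
  ((continuousOn_betaCDF ha hb₂).comp (continuous_const_mul c).continuousOn
    fun _ hs => ⟨mul_nonneg hc₀ hs.1, mul_le_one₀ hc₁ hs.1 hs.2⟩).sub (continuousOn_betaCDF ha hb₁)

lemma hasDerivAt_betaCDF_mul_sub (ha : 0 < a) (hb₁ : 0 < b₁) (hb₂ : 0 < b₂) (hc₀ : 0 < c)
    (hc₁ : c ≤ 1) {t : ℝ} (ht : t ∈ Ioo (0:ℝ) 1) :
    HasDerivAt (fun s => betaCDF a b₂ (c * s) - betaCDF a b₁ s)
      (c * betaPDFReal a b₂ (c * t) - betaPDFReal a b₁ t) t := by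
  have hct : c * t ∈ Ioo (0:ℝ) 1 := ⟨mul_pos hc₀ ht.1, by nlinarith [ht.2]⟩
  have hscaled := (hasDerivAt_betaCDF ha hb₂ hct).comp t ((hasDerivAt_id t).const_mul c)
  rw [mul_one, mul_comm] at hscaled
  exact hscaled.sub (hasDerivAt_betaCDF ha hb₁ ht)

lemma mul_betaPDFReal_mul_sub_neg_iff (ha : 0 < a) (hb₁ : 0 < b₁) (hb₂ : 0 < b₂) (hc₀ : 0 < c)
    (hc₁ : c ≤ 1) {t : ℝ} (ht : t ∈ Ioo (0:ℝ) 1) :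
    c * betaPDFReal a b₂ (c * t) - betaPDFReal a b₁ t < 0 ↔
      betaLogDensityRatio a b₁ b₂ c t < 0 := by
  rw [sub_neg, mul_betaPDFReal_mul_eq ha hb₁ hb₂ hc₀ hc₁ ht,
    mul_lt_iff_lt_one_right (betaPDFReal_pos ht.1 ht.2 ha hb₁), exp_lt_one_iff]

lemma mul_betaPDFReal_mul_sub_pos_iff (ha : 0 < a) (hb₁ : 0 < b₁) (hb₂ : 0 < b₂) (hc₀ : 0 < c)
    (hc₁ : c ≤ 1) {t : ℝ} (ht : t ∈ Ioo (0:ℝ) 1) :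
    0 < c * betaPDFReal a b₂ (c * t) - betaPDFReal a b₁ t ↔
      0 < betaLogDensityRatio a b₁ b₂ c t := by
  rw [sub_pos, mul_betaPDFReal_mul_eq ha hb₁ hb₂ hc₀ hc₁ ht,
    lt_mul_iff_one_lt_right (betaPDFReal_pos ht.1 ht.2 ha hb₁), one_lt_exp_iff]

lemma betaLogDensityRatio_one_strictAntiOn (hb : b₁ < b₂) :
    StrictAntiOn (betaLogDensityRatio a b₁ b₂ 1) (Iio 1) := by
  intro u _ w (hw : w < 1) huw
  have hlog : log (1 - w) < log (1 - u) := log_lt_log (sub_pos.2 hw) (by linarith)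
  simp only [betaLogDensityRatio, one_mul]
  nlinarith

theorem betaCDF_lt_betaCDF_of_lt (ha : 0 < a) (hb₁ : 0 < b₁) (hb : b₁ < b₂) {t : ℝ}
    (ht : t ∈ Ioo (0:ℝ) 1) : betaCDF a b₁ t < betaCDF a b₂ t := by
  have hb₂ := hb₁.trans hb
  by_contra! hle
  obtain ⟨u, w, hu, huw, hw, hgu, hgw⟩ := exists_deriv_nonpos_nonneg ht.1 ht.2
    (continuousOn_betaCDF_mul_sub ha hb₁ hb₂ zero_le_one le_rfl)
    (fun s hs => hasDerivAt_betaCDF_mul_sub ha hb₁ hb₂ one_pos le_rfl hs)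
    (by simp only [one_mul, betaCDF_zero]; linarith)
    (by simp only [one_mul, betaCDF_one ha hb₂, betaCDF_one ha hb₁]; linarith)
  have hLu := (mul_betaPDFReal_mul_sub_pos_iff ha hb₁ hb₂ one_pos le_rfl ⟨hu, huw.trans hw⟩).not.1
    hgu.not_gt
  have hLw := (mul_betaPDFReal_mul_sub_neg_iff ha hb₁ hb₂ one_pos le_rfl ⟨hu.trans huw, hw⟩).not.1
    hgw.not_gt
  linarith [betaLogDensityRatio_one_strictAntiOn (a := a) hb (huw.trans hw) hw huw]

theorem betaCDF_le_betaCDF_mul_of_eq (ha : 0 < a) (hb₁ : 0 < b₁) (hb : b₁ < b₂) (hc₀ : 0 < c)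
    (hc₁ : c < 1) {x x' : ℝ} (hx : 0 < x) (hxx' : x ≤ x') (hx' : x' < 1)
    (heq : betaCDF a b₂ (c * x') = betaCDF a b₁ x') :
    betaCDF a b₁ x ≤ betaCDF a b₂ (c * x) := by
  rcases hxx'.eq_or_lt with rfl | hxx'
  · exact heq.ge
  have hb₂ := hb₁.trans hb
  by_contra! hlt
  have hc_lt_one : betaCDF a b₂ c < 1 := betaCDF_one ha hb₂ ▸
    betaCDF_strictMonoOn ha hb₂ ⟨hc₀.le, hc₁.le⟩ ⟨zero_le_one, le_rfl⟩ hc₁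
  obtain ⟨u, v, w, hu, huv, hvw, hw, hgu, hgv, hgw⟩ := exists_deriv_neg_pos_neg hx hxx' hx'
    (continuousOn_betaCDF_mul_sub ha hb₁ hb₂ hc₀.le hc₁.le)
    (fun s hs => hasDerivAt_betaCDF_mul_sub ha hb₁ hb₂ hc₀ hc₁.le hs)
    (by simp only [mul_zero, betaCDF_zero]; linarith) (by linarith)
    (by rw [mul_one, betaCDF_one ha hb₁]; linarith)
  rw [mul_betaPDFReal_mul_sub_neg_iff ha hb₁ hb₂ hc₀ hc₁.le ⟨hu, huv.trans (hvw.trans hw)⟩] at hgu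
  rw [mul_betaPDFReal_mul_sub_pos_iff ha hb₁ hb₂ hc₀ hc₁.le ⟨hu.trans huv, hvw.trans hw⟩] at hgv
  rw [mul_betaPDFReal_mul_sub_neg_iff ha hb₁ hb₂ hc₀ hc₁.le ⟨hu.trans (huv.trans hvw), hw⟩] at hgw
  linarith [betaLogDensityRatio_le_max (a := a) hb hc₀ hc₁.le huv.le hvw.le hw, max_lt hgu hgw]

theorem div_le_div_of_betaCDF_eq (ha : 0 < a) (hb₁ : 0 < b₁) (hb : b₁ < b₂) {x y x' y' : ℝ}
    (hx : x ∈ Ioo (0:ℝ) 1) (hy : y ∈ Ioo (0:ℝ) 1) (hx' : x' ∈ Ioo (0:ℝ) 1)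
    (hy' : y' ∈ Ioo (0:ℝ) 1) (hxx' : x ≤ x') (hxy : betaCDF a b₁ x = betaCDF a b₂ y)
    (hxy' : betaCDF a b₁ x' = betaCDF a b₂ y') : y / x ≤ y' / x' := by
  have hF₂ := betaCDF_strictMonoOn ha (hb₁.trans hb)
  have hy'x' : y' < x' := (hF₂.lt_iff_lt (Ioo_subset_Icc_self hy') (Ioo_subset_Icc_self hx')).1
    (hxy' ▸ betaCDF_lt_betaCDF_of_lt ha hb₁ hb hx')
  have hc₀ : 0 < y' / x' := div_pos hy'.1 hx'.1
  have hc₁ : y' / x' < 1 := (div_lt_one hx'.1).2 hy'x'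
  have hcross := betaCDF_le_betaCDF_mul_of_eq ha hb₁ hb hc₀ hc₁ hx.1 hxx' hx'.2
    (by rw [div_mul_cancel₀ _ hx'.1.ne', hxy'])
  have hy_le : y ≤ y' / x' * x := (hF₂.le_iff_le (Ioo_subset_Icc_self hy)
    ⟨(mul_pos hc₀ hx.1).le, by nlinarith [hx.2]⟩).1 (hxy ▸ hcross)
  rwa [div_le_iff₀ hx.1]

end ScaledComparison

theorem stmt_5 (ξ₁ ξ₂₁ ξ₂₂ : ℝ) (hξ₁ : 0 < ξ₁) (h1 : 1 < ξ₂₁) (h2 : ξ₂₁ < ξ₂₂)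
    (G₁ G₂ : ℝ → ℝ)
    (hG₁ : ∀ ω ∈ Set.Ioo (0:ℝ) 1, G₁ ω ∈ Set.Ioo (0:ℝ) 1 ∧ betaCDF ξ₁ ξ₂₁ (G₁ ω) = ω)
    (hG₂ : ∀ ω ∈ Set.Ioo (0:ℝ) 1, G₂ ω ∈ Set.Ioo (0:ℝ) 1 ∧ betaCDF ξ₁ ξ₂₂ (G₂ ω) = ω) :
    MonotoneOn (fun ω => G₂ ω / G₁ ω) (Set.Ioo (0:ℝ) 1) := by
  have hb₁ : 0 < ξ₂₁ := zero_lt_one.trans h1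
  intro ω hω ω' hω' hωω'
  obtain ⟨hx, hFx⟩ := hG₁ ω hω
  obtain ⟨hy, hFy⟩ := hG₂ ω hω
  obtain ⟨hx', hFx'⟩ := hG₁ ω' hω'
  obtain ⟨hy', hFy'⟩ := hG₂ ω' hω'
  have hxx' : G₁ ω ≤ G₁ ω' := ((betaCDF_strictMonoOn hξ₁ hb₁).le_iff_le
    (Ioo_subset_Icc_self hx) (Ioo_subset_Icc_self hx')).1 (by rwa [hFx, hFx'])
  exact div_le_div_of_betaCDF_eq hξ₁ hb₁ h2 hx hy hx' hy' hxx' (hFx.trans hFy.symm)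
    (hFx'.trans hFy'.symm)
end

section
/- Let h be a positive integer and ξ > 1. Then the function τ ↦ Γ((h+1)τ)Γ(τ+ξ)/(Γ(τ)Γ((h+1)τ+ξ)) is strictly decreasing on (0,∞). If ξ = 1, the function is constant in τ. -/
/-!
Write `C = h + 1` and `δ = ξ / C`. Euler's limit formula, with the factors `Cτ + k` (`k < CN`)
grouped by their residue mod `C` as in Gauss's multiplication formula, gives
`C ^ ξ Γ(Cτ) Γ(τ + ξ) / (Γ(τ) Γ(Cτ + ξ)) = ∏_{m ≥ 0} g(τ + m)` with
`g(x) = x / (x + ξ) ∏_{j < C} (Cx + j + ξ) / (Cx + j)`.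
Telescoping `x / (x + ξ)` in steps of `δ` gives `g(x) = ∏_{j < C} q(x + jδ) / q(x + j/C)` with
`q(t) = t / (t + δ)`, and `q(t + b) / q(t + a) = 1 + δ (b - a) / ((t + b + δ) (t + a))` decreases
in `t` when `a ≤ b`. As `jδ ≥ j/C`, strictly at `j = 1` when `ξ > 1`, every factor `g(τ + m)` is
strictly decreasing in `τ`. For `ξ = 1` the ratio is `1 / C` by `Γ(x + 1) = x Γ(x)`.
-/

open Real Filter Finset Topology

lemma prod_range_mul_eq_prod_prod {M : Type*} [CommMonoid M] (f : ℕ → M) (C N : ℕ) :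
    ∏ k ∈ range (C * N), f k = ∏ m ∈ range N, ∏ j ∈ range C, f (C * m + j) := by
  induction N with
  | zero => simp
  | succ N ih => rw [mul_add_one, prod_range_add, ih, prod_range_succ]

lemma prod_range_div_add_mul {x δ : ℝ} (hx : 0 < x) (hδ : 0 ≤ δ) (n : ℕ) :
    ∏ j ∈ range n, (x + j * δ) / (x + j * δ + δ) = x / (x + n * δ) := by
  induction n with
  | zero => simp [hx.ne']
  | succ n ih =>
    have : 0 < x + n * δ := by positivity
    rw [prod_range_succ, ih]
    push_cast
    field_simp
    ring

lemma lt_of_tendsto_prod_range {u v : ℕ → ℝ} {a b : ℝ}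
    (hu : Tendsto (fun N => ∏ m ∈ range N, u m) atTop (𝓝 a))
    (hv : Tendsto (fun N => ∏ m ∈ range N, v m) atTop (𝓝 b))
    (hu0 : ∀ m, 0 ≤ u m) (huv : ∀ m, u m ≤ v m) (h0 : u 0 < v 0) (hb : 0 < b) : a < b := by
  have hv0 : 0 < v 0 := (hu0 0).trans_lt h0
  have hle : a ≤ u 0 / v 0 * b := by
    refine le_of_tendsto_of_tendsto' (hu.comp (tendsto_add_atTop_nat 1))
      ((hv.comp (tendsto_add_atTop_nat 1)).const_mul (u 0 / v 0)) fun N => ?_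
    simp only [Function.comp_apply, prod_range_succ']
    rw [mul_left_comm, div_mul_cancel₀ _ hv0.ne']
    exact mul_le_mul_of_nonneg_right
      (prod_le_prod (fun m _ => hu0 _) fun m _ => huv _) (hu0 0)
  calc a ≤ u 0 / v 0 * b := hle
    _ < 1 * b := by gcongr; exact (div_lt_one hv0).2 h0
    _ = b := one_mul b

noncomputable def shiftRatio (a b d t : ℝ) : ℝ :=
  (t + b) / (t + b + d) * ((t + a + d) / (t + a))

lemma shiftRatio_eq_one_add {a b d t : ℝ} (hab : a ≤ b) (hd : 0 ≤ d) (ht : 0 < t + a) :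
    shiftRatio a b d t = 1 + d * (b - a) / ((t + b + d) * (t + a)) := by
  have : 0 < t + b + d := by linarith
  rw [shiftRatio]
  field_simp
  ring

lemma shiftRatio_le_of_le {a b d x y : ℝ} (hab : a ≤ b) (hd : 0 ≤ d) (hx : 0 < x + a)
    (hxy : x ≤ y) : shiftRatio a b d y ≤ shiftRatio a b d x := by
  rw [shiftRatio_eq_one_add hab hd hx, shiftRatio_eq_one_add hab hd (by linarith)]
  have : 0 ≤ d * (b - a) := mul_nonneg hd (by linarith)
  have : 0 < x + b + d := by linarith
  gcongr
  linarith

lemma shiftRatio_lt_of_lt {a b d x y : ℝ} (hab : a < b) (hd : 0 < d) (hx : 0 < x + a)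
    (hxy : x < y) : shiftRatio a b d y < shiftRatio a b d x := by
  rw [shiftRatio_eq_one_add hab.le hd.le hx, shiftRatio_eq_one_add hab.le hd.le (by linarith)]
  have : 0 < d * (b - a) := mul_pos hd (by linarith)
  have : 0 < x + b + d := by linarith
  gcongr

lemma GammaSeq_div_GammaSeq_add (s ξ : ℝ) {n : ℕ} (hn : n ≠ 0) :
    GammaSeq s n / GammaSeq (s + ξ) n =
      (n : ℝ) ^ (-ξ) * ∏ k ∈ range (n + 1), (s + ξ + k) / (s + k) := by
  have hn' : (0 : ℝ) < n := by positivity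
  have : (n : ℝ) ^ (-ξ) = n ^ s / n ^ (s + ξ) := by
    rw [rpow_add hn', rpow_neg hn'.le]
    field_simp [(rpow_pos_of_pos hn' s).ne']
  rw [GammaSeq, GammaSeq, prod_div_distrib, this]
  field_simp [(rpow_pos_of_pos hn' (s + ξ)).ne', Nat.factorial_ne_zero]

lemma tendsto_rpow_neg_mul_prod_div {s ξ : ℝ} (hs : 0 < s) (hsξ : 0 < s + ξ) :
    Tendsto (fun n : ℕ => (n : ℝ) ^ (-ξ) * ∏ k ∈ range n, (s + ξ + k) / (s + k)) atTop
      (𝓝 (Gamma s / Gamma (s + ξ))) := by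
  have hlim := (GammaSeq_tendsto_Gamma s).div (GammaSeq_tendsto_Gamma (s + ξ))
    (Gamma_pos_of_pos hsξ).ne'
  have hlast : Tendsto (fun n : ℕ => (s + ξ + n) / (s + n)) atTop (𝓝 1) := by
    have hinv : Tendsto (fun n : ℕ => (s + n)⁻¹) atTop (𝓝 0) :=
      (tendsto_atTop_add_const_left _ s tendsto_natCast_atTop_atTop).inv_tendsto_atTop
    have := (hinv.const_mul ξ).const_add 1
    rw [mul_zero, add_zero] at this
    refine this.congr' (Eventually.of_forall fun n => ?_)
    have : 0 < s + n := by positivity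
    field_simp
    ring
  have := hlim.div hlast one_ne_zero
  rw [div_one] at this
  refine this.congr' ?_
  filter_upwards [eventually_ne_atTop 0] with n hn
  have : 0 < s + ξ + n := by positivity
  rw [Pi.div_apply, Pi.div_apply, GammaSeq_div_GammaSeq_add s ξ hn, prod_range_succ]
  field_simp

lemma Gamma_mul_Gamma_add_one_div {c τ : ℝ} (hc : 0 < c) (hτ : 0 < τ) :
    Gamma (c * τ) * Gamma (τ + 1) / (Gamma τ * Gamma (c * τ + 1)) = c⁻¹ := by
  have hcτ : 0 < c * τ := mul_pos hc hτ
  rw [Gamma_add_one hτ.ne', Gamma_add_one hcτ.ne']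
  have := Gamma_pos_of_pos hτ
  have := Gamma_pos_of_pos hcτ
  field_simp

noncomputable def gaussFactor (C : ℕ) (ξ x : ℝ) : ℝ :=
  x / (x + ξ) * ∏ j ∈ range C, (C * x + j + ξ) / (C * x + j)

lemma gaussFactor_pos {C : ℕ} {ξ x : ℝ} (hξ : 0 ≤ ξ) (hx : 0 < x) : 0 < gaussFactor C ξ x := by
  refine mul_pos (by positivity) (prod_pos fun j hj => ?_)
  have : 0 < (C : ℝ) := Nat.cast_pos.2 (pos_of_gt (mem_range.1 hj))
  positivity

lemma gaussFactor_eq_prod_shiftRatio {C : ℕ} (hC : C ≠ 0) {ξ x : ℝ} (hξ : 0 ≤ ξ) (hx : 0 < x) :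
    gaussFactor C ξ x = ∏ j ∈ range C, shiftRatio (j / C) (j * (ξ / C)) (ξ / C) x := by
  have hC' : (0 : ℝ) < C := by positivity
  simp only [shiftRatio]
  rw [prod_mul_distrib, prod_range_div_add_mul hx (by positivity), gaussFactor,
    mul_div_cancel₀ _ hC'.ne']
  congr 1
  refine prod_congr rfl fun j _ => ?_
  have : 0 < C * x + j := by positivity
  field_simp

lemma gaussFactor_strictAntiOn {C : ℕ} (hC : 2 ≤ C) {ξ : ℝ} (hξ : 1 < ξ) :
    StrictAntiOn (gaussFactor C ξ) (Set.Ioi 0) := by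
  intro x (hx : 0 < x) y (hy : 0 < y) hxy
  have hC' : (1 : ℝ) < C := by exact_mod_cast hC
  have hδ : 0 < ξ / C := by positivity
  have hshift (j : ℕ) : (j : ℝ) / C ≤ j * (ξ / C) := by
    rw [← mul_div_assoc]
    gcongr
    exact le_mul_of_one_le_right (Nat.cast_nonneg j) hξ.le
  rw [gaussFactor_eq_prod_shiftRatio (by omega) (by linarith) hx,
    gaussFactor_eq_prod_shiftRatio (by omega) (by linarith) hy]
  refine prod_lt_prod (fun j _ => ?_) (fun j _ => ?_) ⟨1, mem_range.2 hC, ?_⟩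
  · rw [shiftRatio]
    positivity
  · exact shiftRatio_le_of_le (hshift j) hδ.le (by positivity) hxy.le
  · refine shiftRatio_lt_of_lt ?_ hδ (by positivity) hxy
    rw [Nat.cast_one, one_mul]
    gcongr

lemma tendsto_prod_gaussFactor {C : ℕ} (hC : C ≠ 0) {ξ τ : ℝ} (hξ : 0 ≤ ξ) (hτ : 0 < τ) :
    Tendsto (fun N => ∏ m ∈ range N, gaussFactor C ξ (τ + m)) atTop
      (𝓝 (C ^ ξ * (Gamma (C * τ) * Gamma (τ + ξ) / (Gamma τ * Gamma (C * τ + ξ))))) := by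
  have hC' : (0 : ℝ) < C := by positivity
  have hmul : Tendsto (fun N => C * N) atTop atTop :=
    tendsto_atTop_mono (fun N => Nat.le_mul_of_pos_left N (Nat.pos_of_ne_zero hC)) tendsto_id
  have hlim := (((tendsto_rpow_neg_mul_prod_div (s := C * τ) (by positivity)
    (by positivity)).comp hmul).div (tendsto_rpow_neg_mul_prod_div hτ (by positivity))
    (div_pos (Gamma_pos_of_pos hτ) (Gamma_pos_of_pos (by positivity))).ne').const_mul
    ((C : ℝ) ^ ξ)
  rw [div_div_div_eq, mul_comm (Gamma (C * τ + ξ))] at hlim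
  refine hlim.congr' ?_
  filter_upwards [eventually_ne_atTop 0] with N hN
  have hN : (N : ℝ) ^ (-ξ) ≠ 0 := (rpow_pos_of_pos (by positivity) _).ne'
  have hrpow : (C : ℝ) ^ ξ * C ^ (-ξ) = 1 := by rw [← rpow_add hC', add_neg_cancel, rpow_zero]
  have hτprod : ∏ m ∈ range N, (τ + m) / (τ + m + ξ) =
      (∏ m ∈ range N, (τ + ξ + m) / (τ + m))⁻¹ := by
    rw [← prod_inv_distrib]
    refine prod_congr rfl fun m _ => ?_
    rw [inv_div, add_right_comm]
  have hCprod : ∏ m ∈ range N, ∏ j ∈ range C,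
      (C * τ + ξ + ((C * m + j : ℕ) : ℝ)) / (C * τ + ((C * m + j : ℕ) : ℝ)) =
      ∏ m ∈ range N, ∏ j ∈ range C, (C * (τ + m) + j + ξ) / (C * (τ + m) + j) := by
    refine prod_congr rfl fun m _ => prod_congr rfl fun j _ => ?_
    push_cast
    congr 1 <;> ring
  simp only [Pi.div_apply, Function.comp_apply, gaussFactor, prod_mul_distrib]
  rw [prod_range_mul_eq_prod_prod, hCprod, hτprod, Nat.cast_mul,
    mul_rpow hC'.le (Nat.cast_nonneg N), mul_assoc, mul_div_assoc, mul_div_mul_left _ _ hN,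
    ← mul_assoc, hrpow, one_mul, div_eq_inv_mul]

theorem stmt_7_general (h : ℕ) (hh : 1 ≤ h) (ξ : ℝ) :
    (1 < ξ → StrictAntiOn
      (fun τ : ℝ => Real.Gamma (((h : ℝ) + 1) * τ) * Real.Gamma (τ + ξ)
        / (Real.Gamma τ * Real.Gamma (((h : ℝ) + 1) * τ + ξ))) (Set.Ioi 0)) ∧
    (ξ = 1 → ∀ τ₁ ∈ Set.Ioi (0:ℝ), ∀ τ₂ ∈ Set.Ioi (0:ℝ),
      Real.Gamma (((h : ℝ) + 1) * τ₁) * Real.Gamma (τ₁ + ξ)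
        / (Real.Gamma τ₁ * Real.Gamma (((h : ℝ) + 1) * τ₁ + ξ))
      = Real.Gamma (((h : ℝ) + 1) * τ₂) * Real.Gamma (τ₂ + ξ)
        / (Real.Gamma τ₂ * Real.Gamma (((h : ℝ) + 1) * τ₂ + ξ))) := by
  constructor
  · intro hξ τ₁ (hτ₁ : 0 < τ₁) τ₂ (hτ₂ : 0 < τ₂) hτ
    have hanti := gaussFactor_strictAntiOn (C := h + 1) (by omega) hξ
    have hshift (τ : ℝ) (hτ : 0 < τ) (m : ℕ) : τ + m ∈ Set.Ioi 0 :=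
      Set.mem_Ioi.2 (by positivity)
    have hlt := lt_of_tendsto_prod_range
      (tendsto_prod_gaussFactor h.succ_ne_zero (by linarith) hτ₂)
      (tendsto_prod_gaussFactor h.succ_ne_zero (by linarith) hτ₁)
      (fun m => (gaussFactor_pos (by linarith) (hshift τ₂ hτ₂ m)).le)
      (fun m => (hanti (hshift τ₁ hτ₁ m) (hshift τ₂ hτ₂ m) (by linarith)).le)
      (by simpa using hanti hτ₁ hτ₂ hτ) (by positivity)
    push_cast at hlt
    exact lt_of_mul_lt_mul_left hlt (by positivity)
  · rintro rfl τ₁ (hτ₁ : 0 < τ₁) τ₂ (hτ₂ : 0 < τ₂)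
    rw [Gamma_mul_Gamma_add_one_div (by positivity) hτ₁,
      Gamma_mul_Gamma_add_one_div (by positivity) hτ₂]

theorem stmt_7 (h : ℕ) (hh : 1 ≤ h) (ξ : ℝ) (hξ : 1 ≤ ξ) :
    (1 < ξ → StrictAntiOn
      (fun τ : ℝ => Real.Gamma (((h : ℝ) + 1) * τ) * Real.Gamma (τ + ξ)
        / (Real.Gamma τ * Real.Gamma (((h : ℝ) + 1) * τ + ξ))) (Set.Ioi 0)) ∧
    (ξ = 1 → ∀ τ₁ ∈ Set.Ioi (0:ℝ), ∀ τ₂ ∈ Set.Ioi (0:ℝ),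
      Real.Gamma (((h : ℝ) + 1) * τ₁) * Real.Gamma (τ₁ + ξ)
        / (Real.Gamma τ₁ * Real.Gamma (((h : ℝ) + 1) * τ₁ + ξ))
      = Real.Gamma (((h : ℝ) + 1) * τ₂) * Real.Gamma (τ₂ + ξ)
        / (Real.Gamma τ₂ * Real.Gamma (((h : ℝ) + 1) * τ₂ + ξ))) :=
  stmt_7_general h hh ξ
end

section
/- For every positive integer h, real ξ ≥ 1, real τ > 0, and every j ∈ ℕ₀: 1/((j+τ+ξ)(j+τ+(ξ+h)/(h+1))) − (1/h)·Σ_{i=1}^{h} 1/((j+τ+i/(h+1))(j+τ+(ξ+i-1)/(h+1))) ≤ 1/((j+τ+ξ)(j+τ+(ξ+h)/(h+1))) − 1/((j+τ+1/2)(j+τ+(ξ-1)/(h+1)+1/2)), and the latter is negative when ξ > 1. -/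
/-!
With `a = j + τ` and `c = (ξ - 1)/(h + 1) ≥ 0`, the averaged terms are values of
`x ↦ 1/(x (x + c))` at the points `a + i/(h + 1)`, whose mean is `a + 1/2`. This function is
convex on `(0, ∞)` as a product of two nonnegative, convex, decreasing functions, so Jensen's
inequality gives the first claim. The second holds because `(ξ + h)/(h + 1) = c + 1`, so the
first product dominates the second factor by factor.
-/

open Finset

lemma convexOn_one_div_mul_add {c : ℝ} (hc : 0 ≤ c) :
    ConvexOn ℝ (Set.Ioi 0) fun x : ℝ => 1 / (x * (x + c)) := by
  have hinv : ConvexOn ℝ (Set.Ioi 0) fun x : ℝ => x⁻¹ := by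
    simpa using convexOn_zpow (𝕜 := ℝ) (-1)
  have hinv_add : ConvexOn ℝ (Set.Ioi 0) fun x : ℝ => (x + c)⁻¹ :=
    (hinv.translate_left c).subset (fun x (hx : 0 < x) => show 0 < c + x by linarith)
      (convex_Ioi 0)
  have hanti : ∀ d : ℝ, 0 ≤ d → AntitoneOn (fun x : ℝ => (x + d)⁻¹) (Set.Ioi 0) :=
    fun d hd x (hx : 0 < x) y _ hxy => inv_anti₀ (by linarith) (by linarith)
  have hprod := hinv.mul hinv_add (fun x (hx : 0 < x) => inv_nonneg.2 hx.le)
    (fun x (hx : 0 < x) => inv_nonneg.2 (by linarith))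
    (by simpa using (hanti 0 le_rfl).monovaryOn (hanti c hc))
  have hfun : (fun x : ℝ => 1 / (x * (x + c))) = (fun x : ℝ => x⁻¹) * fun x => (x + c)⁻¹ := by
    funext x
    rw [Pi.mul_apply, one_div, mul_inv]
  rw [hfun]
  exact hprod

lemma sum_Icc_one_natCast (n : ℕ) : ∑ i ∈ Icc 1 n, (i : ℝ) = n * (n + 1) / 2 := by
  induction n with
  | zero => simp
  | succ n ih =>
    rw [sum_Icc_succ_top (by omega), ih]
    push_cast
    ring

lemma ConvexOn.map_add_half_le_average {s : Set ℝ} {f : ℝ → ℝ} (hf : ConvexOn ℝ s f)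
    {n : ℕ} (hn : 1 ≤ n) {a : ℝ} (hmem : ∀ i ∈ Icc 1 n, a + i / (n + 1) ∈ s) :
    f (a + 1 / 2) ≤ 1 / n * ∑ i ∈ Icc 1 n, f (a + i / (n + 1)) := by
  have hn₀ : (0 : ℝ) < n := by exact_mod_cast hn
  have hw : ∑ _i ∈ Icc 1 n, (1 / n : ℝ) = 1 := by
    rw [sum_const, Nat.card_Icc, nsmul_eq_mul]
    field_simp
    simp
  have hmean : ∑ i ∈ Icc 1 n, (1 / n : ℝ) * (a + i / (n + 1)) = a + 1 / 2 := by
    rw [← mul_sum, sum_add_distrib, sum_const, Nat.card_Icc, nsmul_eq_mul, ← sum_div,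
      sum_Icc_one_natCast]
    field_simp
    push_cast
    ring
  have := hf.map_sum_le (fun _ _ => by positivity) hw hmem
  simp only [smul_eq_mul, hmean] at this
  rwa [mul_sum]

theorem stmt_8 (h : ℕ) (hh : 1 ≤ h) (ξ τ : ℝ) (hξ : 1 ≤ ξ) (hτ : 0 < τ) (j : ℕ) :
    (1 / (((j : ℝ) + τ + ξ) * ((j : ℝ) + τ + (ξ + h) / ((h : ℝ) + 1)))
        - (1 / (h : ℝ)) * ∑ i ∈ Finset.Icc 1 h,
            1 / (((j : ℝ) + τ + (i : ℝ) / ((h : ℝ) + 1))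
              * ((j : ℝ) + τ + (ξ + (i : ℝ) - 1) / ((h : ℝ) + 1)))
      ≤ 1 / (((j : ℝ) + τ + ξ) * ((j : ℝ) + τ + (ξ + h) / ((h : ℝ) + 1)))
        - 1 / (((j : ℝ) + τ + 1 / 2) * ((j : ℝ) + τ + (ξ - 1) / ((h : ℝ) + 1) + 1 / 2))) ∧
    (1 < ξ →
      1 / (((j : ℝ) + τ + ξ) * ((j : ℝ) + τ + (ξ + h) / ((h : ℝ) + 1)))
        - 1 / (((j : ℝ) + τ + 1 / 2) * ((j : ℝ) + τ + (ξ - 1) / ((h : ℝ) + 1) + 1 / 2)) < 0) := by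
  set a : ℝ := j + τ
  have hc : 0 ≤ (ξ - 1) / ((h : ℝ) + 1) := div_nonneg (by linarith) (by positivity)
  have hshift : ∀ x : ℝ, (ξ + x - 1) / ((h : ℝ) + 1) = x / (h + 1) + (ξ - 1) / (h + 1) :=
    fun x => by ring
  have hlast : (ξ + h) / ((h : ℝ) + 1) = (ξ - 1) / (h + 1) + 1 := by field_simp; ring
  set c := (ξ - 1) / ((h : ℝ) + 1)
  refine ⟨sub_le_sub_left ?_ _, fun _ => ?_⟩
  · have hjensen := (convexOn_one_div_mul_add hc).map_add_half_le_average hh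
      (a := a) fun i _ => show 0 < a + i / (h + 1) by positivity
    simpa only [hshift, add_assoc, add_right_comm _ c] using hjensen
  · rw [hlast, sub_neg]
    apply one_div_lt_one_div_of_lt (by positivity)
    exact mul_lt_mul'' (by linarith) (by linarith) (by positivity) (by positivity)
end

section
/- For positive reals k, l, c, the function f(ζ) = ζ(ζ+l) ∫₀¹ (1-ρ)^{ζ+l-1} (1 − 1/(1+cρ)^{k+l}) dρ is strictly increasing in ζ ∈ (0,∞). -/
open MeasureTheory Set

/-!
Integrating by parts, `f ζ = ∫₀¹ ζ (1 - s)^(ζ-1) Ψ(s) ds` with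
`Ψ(s) = (k + l) c (1 - s)^(l+1) (1 + c s)^(-(k+l)-1)` strictly decreasing on `[0, 1]`.
The weight `ζ (1 - s)^(ζ-1)` is the density of `1 - U^(1/ζ)` for `U` uniform on `(0, 1)`, so
the substitution `u = (1 - s)^ζ` gives `f ζ = ∫₀¹ Ψ(1 - u^(1/ζ)) du`; since `1 - u^(1/ζ)`
decreases strictly in `ζ` for each `u ∈ (0, 1)`, `f` is strictly increasing.
-/

lemma image_one_sub_rpow_Ioo {ζ : ℝ} (hζ : 0 < ζ) :
    (fun s : ℝ => (1 - s) ^ ζ) '' Ioo 0 1 = Ioo 0 1 := by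
  ext u
  constructor
  · rintro ⟨s, ⟨hs0, hs1⟩, rfl⟩
    exact ⟨Real.rpow_pos_of_pos (by linarith) ζ,
      Real.rpow_lt_one (by linarith) (by linarith) hζ⟩
  · rintro ⟨hu0, hu1⟩
    refine ⟨1 - u ^ ζ⁻¹, ⟨?_, ?_⟩, ?_⟩
    · simpa using Real.rpow_lt_one hu0.le hu1 (inv_pos.2 hζ)
    · simpa using Real.rpow_pos_of_pos hu0 ζ⁻¹
    · simp [← Real.rpow_mul hu0.le, inv_mul_cancel₀ hζ.ne']

lemma injOn_one_sub_rpow {ζ : ℝ} (hζ : 0 < ζ) :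
    InjOn (fun s : ℝ => (1 - s) ^ ζ) (Ioo 0 1) := fun s hs t ht hst =>
  sub_right_injective <| Real.rpow_left_injOn hζ.ne'
    (show 0 ≤ 1 - s by linarith [hs.2]) (show 0 ≤ 1 - t by linarith [ht.2]) hst

theorem integral_beta_density_mul_eq_integral_comp {ζ : ℝ} (hζ : 0 < ζ) (h : ℝ → ℝ) :
    ∫ s in Ioo 0 1, ζ * (1 - s) ^ (ζ - 1) * h s = ∫ u in Ioo 0 1, h (1 - u ^ ζ⁻¹) := by
  have hderiv : ∀ s ∈ Ioo (0:ℝ) 1,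
      HasDerivWithinAt (fun s : ℝ => (1 - s) ^ ζ) (-(ζ * (1 - s) ^ (ζ - 1))) (Ioo 0 1) s := by
    intro s hs
    have hbase : 1 - s ≠ 0 := by linarith [hs.2]
    exact ((((hasDerivAt_id' s).const_sub 1).rpow_const (Or.inl hbase)).congr_deriv
      (by ring)).hasDerivWithinAt
  conv_rhs => rw [← image_one_sub_rpow_Ioo hζ, integral_image_eq_integral_abs_deriv_smul
    measurableSet_Ioo hderiv (injOn_one_sub_rpow hζ)]
  refine setIntegral_congr_fun measurableSet_Ioo fun s hs => ?_
  have h1s : 0 < 1 - s := by linarith [hs.2]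
  rw [abs_neg, abs_of_pos (by positivity), smul_eq_mul, ← Real.rpow_mul h1s.le,
    mul_inv_cancel₀ hζ.ne', Real.rpow_one, sub_sub_cancel]

lemma setIntegral_Ioo_lt_setIntegral_Ioo {f g : ℝ → ℝ} {a b : ℝ} (hab : a < b)
    (hf : IntegrableOn f (Ioo a b)) (hg : IntegrableOn g (Ioo a b))
    (hlt : ∀ x ∈ Ioo a b, f x < g x) : ∫ x in Ioo a b, f x < ∫ x in Ioo a b, g x := by
  rw [← sub_pos, ← integral_sub hg hf, ← integral_Ioc_eq_integral_Ioo,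
    ← intervalIntegral.integral_of_le hab.le]
  refine intervalIntegral.intervalIntegral_pos_of_pos_on ?_
    (fun x hx => sub_pos.2 (hlt x hx)) hab
  rw [intervalIntegrable_iff_integrableOn_Ioo_of_le hab.le]
  exact hg.sub hf

lemma one_sub_rpow_mem_Icc {u p : ℝ} (hu : u ∈ Icc (0:ℝ) 1) (hp : 0 ≤ p) :
    1 - u ^ p ∈ Icc (0:ℝ) 1 :=
  ⟨sub_nonneg.2 (Real.rpow_le_one hu.1 hu.2 hp), sub_le_self _ (Real.rpow_nonneg hu.1 p)⟩

lemma AntitoneOn.integrableOn_comp_one_sub_rpow {Ψ : ℝ → ℝ} (hΨ : AntitoneOn Ψ (Icc 0 1))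
    {p : ℝ} (hp : 0 ≤ p) : IntegrableOn (fun u => Ψ (1 - u ^ p)) (Ioo 0 1) := by
  refine (MonotoneOn.integrableOn_isCompact isCompact_Icc fun u hu v hv huv => ?_).mono_set
    Ioo_subset_Icc_self
  exact hΨ (one_sub_rpow_mem_Icc hv hp) (one_sub_rpow_mem_Icc hu hp)
    (sub_le_sub_left (Real.rpow_le_rpow hu.1 huv hp) 1)

theorem StrictAntiOn.strictMonoOn_integral_comp_one_sub_rpow_inv {Ψ : ℝ → ℝ}
    (hΨ : StrictAntiOn Ψ (Icc 0 1)) :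
    StrictMonoOn (fun ζ : ℝ => ∫ u in Ioo 0 1, Ψ (1 - u ^ ζ⁻¹)) (Ioi 0) := by
  intro ζ₁ (hζ₁ : 0 < ζ₁) ζ₂ (hζ₂ : 0 < ζ₂) hlt
  have hp₁ : 0 ≤ ζ₁⁻¹ := inv_nonneg.2 hζ₁.le
  have hp₂ : 0 ≤ ζ₂⁻¹ := inv_nonneg.2 hζ₂.le
  refine setIntegral_Ioo_lt_setIntegral_Ioo one_pos
    (hΨ.antitoneOn.integrableOn_comp_one_sub_rpow hp₁)
    (hΨ.antitoneOn.integrableOn_comp_one_sub_rpow hp₂) fun u hu => ?_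
  have hpow : u ^ ζ₁⁻¹ < u ^ ζ₂⁻¹ :=
    Real.rpow_lt_rpow_of_exponent_gt hu.1 hu.2 (inv_strictAntiOn hζ₁ hζ₂ hlt)
  exact hΨ (one_sub_rpow_mem_Icc (Ioo_subset_Icc_self hu) hp₂)
    (one_sub_rpow_mem_Icc (Ioo_subset_Icc_self hu) hp₁) (sub_lt_sub_left hpow 1)

theorem integral_rpow_one_sub_by_parts {a m c : ℝ} (ha : 0 < a) (hc : 0 ≤ c) :
    ∫ ρ in Ioo 0 1, a * (1 - ρ) ^ (a - 1) * (1 - (1 + c * ρ) ^ (-m)) =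
      ∫ ρ in Ioo 0 1, (1 - ρ) ^ a * (m * c * (1 + c * ρ) ^ (-m - 1)) := by
  have hbase : ∀ ρ ∈ Icc (0:ℝ) 1, 0 < 1 + c * ρ := fun ρ hρ => by nlinarith [hρ.1]
  have hbase_cont : ContinuousOn (fun ρ : ℝ => 1 + c * ρ) (Icc 0 1) := by fun_prop
  have hu : ContinuousOn (fun ρ : ℝ => (1 - ρ) ^ a) (uIcc 0 1) :=
    ((continuous_const.sub continuous_id).rpow_const fun _ => Or.inr ha.le).continuousOn
  have hv : ContinuousOn (fun ρ : ℝ => 1 - (1 + c * ρ) ^ (-m)) (uIcc 0 1) := by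
    rw [uIcc_of_le zero_le_one]
    exact continuousOn_const.sub <| hbase_cont.rpow_const fun ρ hρ => Or.inl (hbase ρ hρ).ne'
  have hv' : ContinuousOn (fun ρ : ℝ => m * c * (1 + c * ρ) ^ (-m - 1)) (uIcc 0 1) := by
    rw [uIcc_of_le zero_le_one]
    exact continuousOn_const.mul <| hbase_cont.rpow_const fun ρ hρ => Or.inl (hbase ρ hρ).ne'
  have huu' : ∀ ρ ∈ Ioo (min 0 1) (max 0 1), HasDerivWithinAt (fun ρ : ℝ => (1 - ρ) ^ a)
      (-(a * (1 - ρ) ^ (a - 1))) (Ioi ρ) ρ := by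
    simp only [zero_le_one, min_eq_left, max_eq_right]
    intro ρ hρ
    have hbase_ne : 1 - ρ ≠ 0 := by linarith [hρ.2]
    exact ((((hasDerivAt_id' ρ).const_sub 1).rpow_const (Or.inl hbase_ne)).congr_deriv
      (by ring)).hasDerivWithinAt
  have hvv' : ∀ ρ ∈ Ioo (min 0 1) (max 0 1),
      HasDerivWithinAt (fun ρ : ℝ => 1 - (1 + c * ρ) ^ (-m))
        (m * c * (1 + c * ρ) ^ (-m - 1)) (Ioi ρ) ρ := by
    simp only [zero_le_one, min_eq_left, max_eq_right]
    intro ρ hρ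
    exact (((((hasDerivAt_id' ρ).const_mul c).const_add 1).rpow_const
      (Or.inl (hbase ρ (Ioo_subset_Icc_self hρ)).ne')).const_sub 1 |>.congr_deriv
      (by ring)).hasDerivWithinAt
  have hu' : IntervalIntegrable (fun ρ : ℝ => -(a * (1 - ρ) ^ (a - 1))) volume 0 1 := by
    have := (intervalIntegral.intervalIntegrable_rpow' (a := 0) (b := 1) (r := a - 1)
      (by linarith)).comp_sub_left 1
    simp only [sub_zero, sub_self] at this
    exact (this.symm.const_mul a).neg
  have hibp := intervalIntegral.integral_mul_deriv_eq_deriv_mul_of_hasDeriv_right hu hv huu' hvv'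
    hu' hv'.intervalIntegrable
  simp only [Real.zero_rpow ha.ne', sub_self, sub_zero, mul_zero, add_zero, Real.one_rpow,
    mul_one, neg_mul, intervalIntegral.integral_neg, sub_neg_eq_add, zero_mul, zero_add] at hibp
  simp only [← integral_Ioc_eq_integral_Ioo, ← intervalIntegral.integral_of_le zero_le_one,
    hibp]

-- The `Ψ` above, with `m = k + l`.
noncomputable def ibpWeight (m l c x : ℝ) : ℝ :=
  m * c * ((1 - x) ^ (l + 1) * (1 + c * x) ^ (-m - 1))

theorem strictAntiOn_ibpWeight {m l c : ℝ} (hm : 0 < m) (hl : -1 < l) (hc : 0 < c) :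
    StrictAntiOn (ibpWeight m l c) (Icc 0 1) := by
  intro x hx y hy hxy
  have hfirst : (1 - y) ^ (l + 1) < (1 - x) ^ (l + 1) :=
    Real.rpow_lt_rpow (sub_nonneg.2 hy.2) (by linarith) (by linarith)
  have hsecond : (1 + c * y) ^ (-m - 1) < (1 + c * x) ^ (-m - 1) :=
    Real.rpow_lt_rpow_of_neg (by nlinarith [hx.1]) (by nlinarith) (by linarith)
  exact mul_lt_mul_of_pos_left (mul_lt_mul'' hfirst hsecond
    (Real.rpow_nonneg (sub_nonneg.2 hy.2) _) (Real.rpow_nonneg (by nlinarith [hy.1]) _))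
    (mul_pos hm hc)

theorem mul_mul_integral_eq_integral_ibpWeight_comp {m l c ζ : ℝ} (hζ : 0 < ζ)
    (hζl : 0 < ζ + l) (hc : 0 ≤ c) :
    ζ * (ζ + l) * ∫ ρ in Ioo 0 1, (1 - ρ) ^ (ζ + l - 1) * (1 - 1 / (1 + c * ρ) ^ m) =
      ∫ u in Ioo 0 1, ibpWeight m l c (1 - u ^ ζ⁻¹) := by
  calc ζ * (ζ + l) * ∫ ρ in Ioo 0 1, (1 - ρ) ^ (ζ + l - 1) * (1 - 1 / (1 + c * ρ) ^ m)
      = ζ * ∫ ρ in Ioo 0 1, (ζ + l) * (1 - ρ) ^ (ζ + l - 1) * (1 - (1 + c * ρ) ^ (-m)) := by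
        rw [mul_assoc, ← integral_const_mul]
        congr 1
        refine setIntegral_congr_fun measurableSet_Ioo fun ρ hρ => ?_
        rw [Real.rpow_neg (by nlinarith [hρ.1]), one_div, mul_assoc]
    _ = ζ * ∫ ρ in Ioo 0 1, (1 - ρ) ^ (ζ + l) * (m * c * (1 + c * ρ) ^ (-m - 1)) := by
        rw [integral_rpow_one_sub_by_parts hζl hc]
    _ = ∫ s in Ioo 0 1, ζ * (1 - s) ^ (ζ - 1) * ibpWeight m l c s := by
        rw [← integral_const_mul]
        refine setIntegral_congr_fun measurableSet_Ioo fun s hs => ?_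
        have hsplit : (1 - s) ^ (ζ + l) = (1 - s) ^ (ζ - 1) * (1 - s) ^ (l + 1) := by
          rw [← Real.rpow_add (by linarith [hs.2])]
          ring_nf
        rw [hsplit, ibpWeight]
        ring
    _ = ∫ u in Ioo 0 1, ibpWeight m l c (1 - u ^ ζ⁻¹) :=
        integral_beta_density_mul_eq_integral_comp hζ _

theorem stmt_9 (k l c : ℝ) (hk : 0 < k) (hl : 0 < l) (hc : 0 < c) :
    StrictMonoOn
      (fun ζ : ℝ => ζ * (ζ + l) *
        ∫ ρ in Set.Ioo (0:ℝ) 1, (1 - ρ) ^ (ζ + l - 1) * (1 - 1 / (1 + c * ρ) ^ (k + l)))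
      (Set.Ioi 0) := by
  have hΨ : StrictAntiOn (ibpWeight (k + l) l c) (Icc 0 1) :=
    strictAntiOn_ibpWeight (add_pos hk hl) (by linarith) hc
  refine hΨ.strictMonoOn_integral_comp_one_sub_rpow_inv.congr fun ζ (hζ : 0 < ζ) => ?_
  exact (mul_mul_integral_eq_integral_ibpWeight_comp hζ (by linarith) hc.le).symm
end

section
/- For positive reals k, l, m and c₁ > 0 and a probability measure Beta(1, k+l+m) on (0,1), Jensen's inequality gives: ∫₀¹ (1-ρ)^{k+l+m-1} g(ρ) dρ ≥ (1/(k+l+m)) · g(1/(k+l+m+1)), where g(ρ) = (1/ρ)(1 − 1/(1+c₁ρ)^{k+l}) is convex on (0,1). -/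
/-!
Let `g = invPowSlope c q`, i.e. `g ρ = (1 - (1 + c ρ)^{-q}) / ρ`. Differentiating in `t` gives
`g ρ = ∫₀¹ q c (1 + c ρ t)^{-(q+1)} dt`, an average of functions convex in `ρ`, so `g` is convex
on `(0, ∞)`. The weight `(1 - ρ)^{n-1}` on `(0, 1)` has total mass `1 / n` and barycenter
`1 / (n + 1)`, so integrating the supporting line of `g` at the barycenter against it gives
Jensen's inequality `∫ (1 - ρ)^{n-1} g ρ dρ ≥ g (1 / (n + 1)) / n`.
-/

open MeasureTheory Set

namespace ConvexOn

variable {S : Set ℝ} {f : ℝ → ℝ} {x₀ : ℝ}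

theorem add_rightDeriv_mul_sub_le (hf : ConvexOn ℝ S f) (hx₀ : x₀ ∈ interior S) {x : ℝ}
    (hx : x ∈ S) : f x₀ + derivWithin f (Ioi x₀) x₀ * (x - x₀) ≤ f x := by
  rcases lt_trichotomy x x₀ with h | rfl | h
  · have hslope := (hf.slope_le_leftDeriv_of_mem_interior hx hx₀ h).trans
      (hf.leftDeriv_le_rightDeriv_of_mem_interior hx₀)
    rw [slope_def_field, div_le_iff₀ (sub_pos.2 h)] at hslope
    linarith
  · simp
  · have hslope := hf.rightDeriv_le_slope_of_mem_interior hx₀ hx h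
    rw [slope_def_field, le_div_iff₀ (sub_pos.2 h)] at hslope
    linarith

theorem setIntegral_mul_map_le_of_barycenter (hf : ConvexOn ℝ S f) (hS : MeasurableSet S)
    (hx₀ : x₀ ∈ interior S) {w : ℝ → ℝ} (hw : ∀ x ∈ S, 0 ≤ w x) (hwi : IntegrableOn w S)
    (hwxi : IntegrableOn (fun x => w x * x) S) (hwfi : IntegrableOn (fun x => w x * f x) S)
    (hbar : ∫ x in S, w x * x = (∫ x in S, w x) * x₀) :
    (∫ x in S, w x) * f x₀ ≤ ∫ x in S, w x * f x := by
  set d := derivWithin f (Ioi x₀) x₀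
  have hline : ∀ x, w x * (f x₀ + d * (x - x₀)) = f x₀ * w x + d * (w x * x) - d * x₀ * w x :=
    fun x => by ring
  have hsumi : IntegrableOn (fun x => f x₀ * w x + d * (w x * x)) S :=
    (hwi.const_mul _).add (hwxi.const_mul _)
  have hlinei : IntegrableOn (fun x => w x * (f x₀ + d * (x - x₀))) S := by
    simp_rw [hline]
    exact hsumi.sub (hwi.const_mul _)
  calc (∫ x in S, w x) * f x₀ = ∫ x in S, w x * (f x₀ + d * (x - x₀)) := by
        simp_rw [hline]
        rw [integral_sub hsumi (hwi.const_mul _),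
          integral_add (hwi.const_mul _) (hwxi.const_mul _), integral_const_mul,
          integral_const_mul, integral_const_mul, hbar]
        ring
    _ ≤ ∫ x in S, w x * f x := setIntegral_mono_on hlinei hwfi hS fun x hx =>
        mul_le_mul_of_nonneg_left (hf.add_rightDeriv_mul_sub_le hx₀ hx) (hw x hx)

end ConvexOn

theorem convexOn_intervalIntegral {E : Type*} [AddCommGroup E] [Module ℝ E] {s : Set E}
    {a b : ℝ} (hab : a ≤ b) {F : E → ℝ → ℝ} (hF : ∀ t ∈ Icc a b, ConvexOn ℝ s (F · t))
    (hFi : ∀ x ∈ s, IntervalIntegrable (F x) volume a b) :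
    ConvexOn ℝ s fun x => ∫ t in a..b, F x t := by
  have hs : Convex ℝ s := (hF a ⟨le_rfl, hab⟩).1
  refine ⟨hs, fun x hx y hy α β hα hβ hαβ => ?_⟩
  have hxy := hs hx hy hα hβ hαβ
  simp only [smul_eq_mul]
  calc ∫ t in a..b, F (α • x + β • y) t ≤ ∫ t in a..b, (α * F x t + β * F y t) :=
        intervalIntegral.integral_mono_on hab (hFi _ hxy)
          (((hFi x hx).const_mul α).add ((hFi y hy).const_mul β))
          fun t ht => (hF t ht).2 hx hy hα hβ hαβ
    _ = α * (∫ t in a..b, F x t) + β * ∫ t in a..b, F y t := by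
        rw [intervalIntegral.integral_add ((hFi x hx).const_mul α) ((hFi y hy).const_mul β),
          intervalIntegral.integral_const_mul, intervalIntegral.integral_const_mul]

open Real in
theorem convexOn_rpow_neg {p : ℝ} (hp : 0 ≤ p) : ConvexOn ℝ (Ioi 0) fun x : ℝ => x ^ (-p) := by
  refine ⟨convex_Ioi 0, fun x hx y hy a b ha hb hab => ?_⟩
  have hxy : 0 < a • x + b • y := convex_Ioi 0 hx hy ha hb hab
  have hlog := strictConcaveOn_log_Ioi.concaveOn.2 hx hy ha hb hab
  simp only [smul_eq_mul] at hxy hlog ⊢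
  rw [rpow_def_of_pos hx, rpow_def_of_pos hy, rpow_def_of_pos hxy]
  calc exp (log (a * x + b * y) * -p) ≤ exp (a * (log x * -p) + b * (log y * -p)) :=
        exp_le_exp.2 (by nlinarith)
    _ ≤ a * exp (log x * -p) + b * exp (log y * -p) :=
        convexOn_exp.2 (mem_univ _) (mem_univ _) ha hb hab

theorem convexOn_one_add_mul_rpow_neg {p u : ℝ} (hp : 0 ≤ p) (hu : 0 ≤ u) :
    ConvexOn ℝ (Ici 0) fun x : ℝ => (1 + u * x) ^ (-p) := by
  refine ⟨convex_Ici 0, fun x hx y hy a b ha hb hab => ?_⟩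
  have hpos : ∀ z ∈ Ici (0:ℝ), (1 + u * z) ∈ Ioi 0 := fun z hz => by
    have : 0 ≤ u * z := mul_nonneg hu hz
    simp only [mem_Ioi]; linarith
  have h := (convexOn_rpow_neg hp).2 (hpos x hx) (hpos y hy) ha hb hab
  have hcomb : a • (1 + u * x) + b • (1 + u * y) = 1 + u * (a • x + b • y) := by
    simp only [smul_eq_mul]; linear_combination hab
  rwa [hcomb] at h

noncomputable def invPowSlope (c q ρ : ℝ) : ℝ := 1 / ρ * (1 - 1 / (1 + c * ρ) ^ q)

section invPowSlope

variable {c ρ : ℝ}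

theorem one_le_one_add_mul_mul (hc : 0 ≤ c) (hρ : 0 ≤ ρ) {t : ℝ} (ht : 0 ≤ t) :
    1 ≤ 1 + c * ρ * t :=
  le_add_of_nonneg_right (by positivity)

theorem intervalIntegrable_mul_one_add_mul_rpow_neg (q : ℝ) (hc : 0 ≤ c) (hρ : 0 ≤ ρ) :
    IntervalIntegrable (fun t => q * c * (1 + c * ρ * t) ^ (-(q + 1))) volume 0 1 := by
  refine ContinuousOn.intervalIntegrable <| continuousOn_const.mul <|
    (by fun_prop : Continuous fun t : ℝ => 1 + c * ρ * t).continuousOn.rpow_const fun t ht => ?_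
  rw [uIcc_of_le zero_le_one] at ht
  exact Or.inl (zero_lt_one.trans_le (one_le_one_add_mul_mul hc hρ ht.1)).ne'

theorem intervalIntegral_mul_one_add_mul_rpow_neg (q : ℝ) (hc : 0 ≤ c) (hρ : 0 < ρ) :
    ∫ t in (0:ℝ)..1, q * c * (1 + c * ρ * t) ^ (-(q + 1)) = invPowSlope c q ρ := by
  have hderiv : ∀ t ∈ uIcc (0:ℝ) 1, HasDerivAt (fun t => -(1 / ρ) * (1 + c * ρ * t) ^ (-q))
      (q * c * (1 + c * ρ * t) ^ (-(q + 1))) t := fun t ht => by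
    rw [uIcc_of_le zero_le_one] at ht
    have hlin : HasDerivAt (fun t : ℝ => 1 + c * ρ * t) (c * ρ) t := by
      simpa using ((hasDerivAt_id t).const_mul (c * ρ)).const_add 1
    have hbase : 1 + c * ρ * t ≠ 0 :=
      (zero_lt_one.trans_le (one_le_one_add_mul_mul hc hρ.le ht.1)).ne'
    refine (((Real.hasDerivAt_rpow_const (Or.inl hbase)).comp t hlin).const_mul
      (-(1 / ρ))).congr_deriv ?_
    rw [show -q - 1 = -(q + 1) by ring]
    field_simp
  rw [intervalIntegral.integral_eq_sub_of_hasDerivAt hderiv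
    (intervalIntegrable_mul_one_add_mul_rpow_neg q hc hρ.le), invPowSlope,
    Real.rpow_neg (by positivity)]
  simp only [one_div, mul_one, neg_mul, mul_zero, add_zero, Real.one_rpow, sub_neg_eq_add]
  ring

theorem convexOn_invPowSlope (hc : 0 ≤ c) {q : ℝ} (hq : 0 ≤ q) :
    ConvexOn ℝ (Ioi 0) (invPowSlope c q) := by
  have hkernel : ∀ t ∈ Icc (0:ℝ) 1,
      ConvexOn ℝ (Ioi 0) fun ρ => q * c * (1 + c * ρ * t) ^ (-(q + 1)) := fun t ht => by
    simp_rw [mul_right_comm c _ t]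
    exact ((convexOn_one_add_mul_rpow_neg (by linarith) (mul_nonneg hc ht.1)).subset
      Ioi_subset_Ici_self (convex_Ioi 0)).smul (mul_nonneg hq hc)
  exact (convexOn_intervalIntegral zero_le_one hkernel fun ρ hρ =>
    intervalIntegrable_mul_one_add_mul_rpow_neg q hc (le_of_lt hρ)).congr
    fun ρ hρ => intervalIntegral_mul_one_add_mul_rpow_neg q hc hρ

theorem abs_invPowSlope_le (hc : 0 ≤ c) (hρ : 0 < ρ) {q : ℝ} (hq : 0 ≤ q) :
    |invPowSlope c q ρ| ≤ q * c := by
  rw [← intervalIntegral_mul_one_add_mul_rpow_neg q hc hρ, ← Real.norm_eq_abs]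
  refine (intervalIntegral.norm_integral_le_of_norm_le_const (C := q * c) fun t ht => ?_).trans_eq
    (by simp)
  rw [uIoc_of_le zero_le_one] at ht
  have hbase := one_le_one_add_mul_mul hc hρ.le ht.1.le
  have hle : (1 + c * ρ * t) ^ (-(q + 1)) ≤ 1 :=
    Real.rpow_le_one_of_one_le_of_nonpos hbase (by linarith)
  rw [Real.norm_of_nonneg (mul_nonneg (mul_nonneg hq hc) (Real.rpow_nonneg (by linarith) _))]
  exact mul_le_of_le_one_right (mul_nonneg hq hc) hle

theorem integrableOn_mul_invPowSlope {w : ℝ → ℝ} {s : Set ℝ} (hw : IntegrableOn w s)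
    (hs : MeasurableSet s) (hspos : s ⊆ Ioi 0) (hc : 0 ≤ c) {q : ℝ} (hq : 0 ≤ q) :
    IntegrableOn (fun x => w x * invPowSlope c q x) s := by
  refine hw.mul_bdd (c := q * c) (by unfold invPowSlope; fun_prop) ((ae_restrict_iff' hs).2 ?_)
  exact Filter.Eventually.of_forall fun x hx => abs_invPowSlope_le hc (hspos hx) hq

end invPowSlope

theorem one_sub_rpow_sub_one_mul_self {n x : ℝ} (hx : x < 1) :
    (1 - x) ^ (n - 1) * x = (1 - x) ^ (n - 1) - (1 - x) ^ n := by
  have hpow : (1 - x) ^ (n - 1) * (1 - x) = (1 - x) ^ n := by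
    rw [← Real.rpow_add_one (by linarith) (n - 1), sub_add_cancel]
  linear_combination -hpow

theorem integrableOn_Ioo_one_sub_rpow {r : ℝ} (hr : -1 < r) :
    IntegrableOn (fun x : ℝ => (1 - x) ^ r) (Ioo 0 1) := by
  have h := (intervalIntegral.intervalIntegrable_rpow' (a := 1) (b := 0) hr).comp_sub_left 1
  simp only [sub_self, sub_zero] at h
  exact ((intervalIntegrable_iff_integrableOn_Ioc_of_le zero_le_one).1 h).mono_set
    Ioo_subset_Ioc_self

theorem integral_Ioo_one_sub_rpow {r : ℝ} (hr : -1 < r) :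
    ∫ x in Ioo (0:ℝ) 1, (1 - x) ^ r = 1 / (r + 1) := by
  rw [← integral_Ioc_eq_integral_Ioo, ← intervalIntegral.integral_of_le zero_le_one,
    intervalIntegral.integral_comp_sub_left (fun x : ℝ => x ^ r) 1]
  simp [integral_rpow (Or.inl hr), Real.zero_rpow (by linarith : r + 1 ≠ 0)]

theorem integrableOn_Ioo_one_sub_rpow_sub_one_mul_self {n : ℝ} (hn : 0 < n) :
    IntegrableOn (fun x : ℝ => (1 - x) ^ (n - 1) * x) (Ioo 0 1) :=
  ((integrableOn_Ioo_one_sub_rpow (by linarith)).sub (integrableOn_Ioo_one_sub_rpow (by linarith))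
    ).congr_fun (fun x hx => (one_sub_rpow_sub_one_mul_self hx.2).symm) measurableSet_Ioo

theorem integral_Ioo_one_sub_rpow_sub_one_mul_self {n : ℝ} (hn : 0 < n) :
    ∫ x in Ioo (0:ℝ) 1, (1 - x) ^ (n - 1) * x = 1 / n * (1 / (n + 1)) := by
  rw [setIntegral_congr_fun measurableSet_Ioo fun x hx => one_sub_rpow_sub_one_mul_self hx.2,
    integral_sub (integrableOn_Ioo_one_sub_rpow (by linarith))
      (integrableOn_Ioo_one_sub_rpow (by linarith)),
    integral_Ioo_one_sub_rpow (by linarith), integral_Ioo_one_sub_rpow (by linarith),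
    sub_add_cancel]
  field_simp
  ring

theorem stmt_12 (k l m c₁ : ℝ) (hk : 0 < k) (hl : 0 < l) (hm : 0 < m) (hc : 0 < c₁) :
    ∫ ρ in Set.Ioo (0:ℝ) 1,
        (1 - ρ) ^ (k + l + m - 1) * ((1 / ρ) * (1 - 1 / (1 + c₁ * ρ) ^ (k + l)))
      ≥ (1 / (k + l + m)) *
        ((1 / (1 / (k + l + m + 1))) * (1 - 1 / (1 + c₁ * (1 / (k + l + m + 1))) ^ (k + l))) := by
  set n := k + l + m
  have hn : 0 < n := by positivity
  have hq : 0 ≤ k + l := by positivity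
  have hx₀ : 1 / (n + 1) ∈ interior (Ioo (0:ℝ) 1) := by
    rw [interior_Ioo]
    exact ⟨by positivity, by rw [div_lt_one (by linarith)]; linarith⟩
  have hw := integrableOn_Ioo_one_sub_rpow (r := n - 1) (by linarith)
  have hjensen := ((convexOn_invPowSlope hc.le hq).subset Ioo_subset_Ioi_self
    (convex_Ioo 0 1)).setIntegral_mul_map_le_of_barycenter measurableSet_Ioo hx₀
    (fun x hx => Real.rpow_nonneg (by linarith [hx.2]) _) hw
    (integrableOn_Ioo_one_sub_rpow_sub_one_mul_self hn)
    (integrableOn_mul_invPowSlope hw measurableSet_Ioo Ioo_subset_Ioi_self hc.le hq)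
    (by rw [integral_Ioo_one_sub_rpow_sub_one_mul_self hn, integral_Ioo_one_sub_rpow (by linarith),
      sub_add_cancel])
  rwa [integral_Ioo_one_sub_rpow (by linarith), sub_add_cancel] at hjensen
end
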